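/- arXiv:1108.2219 — 5 statements merged into one kernel-verified Lean document; each statement's English description precedes it below -/
import Mathlib

section
/- The generating function 𝓕 = ∑_{n≥1} s_{δ_n/δ_{n-2}} for staircase ribbon Schur functions satisfies the functional equation 𝓕(x₁, x₂, …) - 𝓕(x₂, x₃, …) = x₁ + x₁·𝓕(x₂, x₃, …)·𝓕(x₁, x₂, …). -/
/-!
Reading the ribbon δ_n/δ_{n-2} from its top-right cell down to `(n, 1)` turns a tableau into a
word `a₀ ≥ a₁ < a₂ ≥ a₃ < ⋯` of length `2n - 1`, and every such zigzag word arises from exactly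
one tableau; so `𝓕(x_lo, x_{lo+1}, …)` counts zigzag words with letters `≥ lo` by content.
A zigzag word with letters `≥ 1` either avoids the letter 1 (these are counted by `𝓕(x₂, x₃, …)`),
or is the word `1`, or splits at its last `1` as `u ++ 1 :: v` with `u` an arbitrary zigzag word
and `v` a zigzag word avoiding 1. Hence `𝓕(x₁, …) = 𝓕(x₂, …) + x₁ (1 + 𝓕(x₁, …) 𝓕(x₂, …))`.
-/

noncomputable section

/-- The cells of the ribbon skew shape δ_n/δ_{n-2} (rows and columns 1-indexed):
row `i` (1 ≤ i ≤ n) contains the cells in columns `max 1 (n - i) ≤ j ≤ n + 1 - i`.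
For n = 1 this is the single cell of δ₁ (interpreting δ_{-1} = ∅). -/
def ribbonCells (n : ℕ) : Finset (ℕ × ℕ) :=
  (Finset.Icc 1 n ×ˢ Finset.Icc 1 n).filter
    (fun c => n - c.1 ≤ c.2 ∧ c.2 ≤ n + 1 - c.1)

/-- A semistandard Young tableau of shape δ_n/δ_{n-2} with all entries `≥ lo`:
rows weakly increase, columns strictly increase. -/
structure RibbonSSYT (n lo : ℕ) where
  entry : ℕ × ℕ → ℕ
  lo_le : ∀ c ∈ ribbonCells n, lo ≤ entry c
  outside : ∀ c ∉ ribbonCells n, entry c = 0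
  rowWeak : ∀ i j, (i, j) ∈ ribbonCells n → (i, j + 1) ∈ ribbonCells n →
    entry (i, j) ≤ entry (i, j + 1)
  colStrict : ∀ i j, (i, j) ∈ ribbonCells n → (i + 1, j) ∈ ribbonCells n →
    entry (i, j) < entry (i + 1, j)

/-- The generating function `∑_{n ≥ 1} s_{δ_n/δ_{n-2}}` in the variables `x_lo, x_{lo+1}, …`:
the coefficient of the monomial `m` is the number of pairs `(n, T)` with `n ≥ 1` and `T`
a SSYT of shape δ_n/δ_{n-2} with entries ≥ lo, whose content is `m`. -/
def F (lo : ℕ) : MvPowerSeries ℕ ℚ :=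
  fun m => (Nat.card {p : (n : ℕ) × RibbonSSYT n lo //
    1 ≤ p.1 ∧ ∀ k, ((ribbonCells p.1).filter (fun c => p.2.entry c = k)).card = m k} : ℚ)

open MvPowerSeries Finset

section GeneratingFunction

variable {σ R α β : Type*} [Semiring R]

def genFun (w : α → σ →₀ ℕ) : MvPowerSeries σ R :=
  fun m => Nat.card {a // w a = m}

lemma coeff_genFun (w : α → σ →₀ ℕ) (m : σ →₀ ℕ) :
    coeff m (genFun w : MvPowerSeries σ R) = Nat.card {a // w a = m} := rfl

lemma genFun_congr {wα : α → σ →₀ ℕ} {wβ : β → σ →₀ ℕ} (e : α ≃ β)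
    (he : ∀ a, wβ (e a) = wα a) : (genFun wα : MvPowerSeries σ R) = genFun wβ := by
  ext m
  rw [coeff_genFun, coeff_genFun, Nat.card_congr (e.subtypeEquiv (p := (wα · = m))
    (q := (wβ · = m)) fun a => by rw [he])]

lemma finite_fiber_of_injective {wα : α → σ →₀ ℕ} {wβ : β → σ →₀ ℕ} {f : α → β}
    (hf : Function.Injective f) (d : σ →₀ ℕ) (hfw : ∀ a, wβ (f a) = d + wα a)
    (hfin : ∀ m, Finite {b // wβ b = m}) (m : σ →₀ ℕ) : Finite {a // wα a = m} :=
  Finite.of_injective (fun a => (⟨f a.1, by rw [hfw, a.2]⟩ : {b // wβ b = d + m}))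
    fun _ _ h => Subtype.ext (hf (Subtype.mk.inj h))

lemma genFun_sum {wα : α → σ →₀ ℕ} {wβ : β → σ →₀ ℕ}
    (hfin : ∀ m, Finite {x // Sum.elim wα wβ x = m}) :
    (genFun (Sum.elim wα wβ) : MvPowerSeries σ R) = genFun wα + genFun wβ := by
  ext m
  let e : {x // Sum.elim wα wβ x = m} ≃ {a // wα a = m} ⊕ {b // wβ b = m} := Equiv.subtypeSum
  have := Finite.of_equiv _ e
  have := Finite.of_injective _ (Sum.inl_injective (α := {a // wα a = m}) (β := {b // wβ b = m}))
  have := Finite.of_injective _ (Sum.inr_injective (α := {a // wα a = m}) (β := {b // wβ b = m}))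
  rw [map_add, coeff_genFun, coeff_genFun, coeff_genFun, Nat.card_congr e, Nat.card_sum,
    Nat.cast_add]

lemma genFun_const (d : σ →₀ ℕ) :
    (genFun (fun _ : PUnit => d) : MvPowerSeries σ R) = monomial d 1 := by
  classical
  ext m
  rw [coeff_genFun, coeff_monomial]
  split_ifs with h
  · subst h
    simp
  · simp [Ne.symm h]

lemma genFun_option {w : α → σ →₀ ℕ} (hfin : ∀ m, Finite {o : Option α // o.elim 0 w = m}) :
    (genFun (fun o : Option α => o.elim 0 w) : MvPowerSeries σ R) = 1 + genFun w := by
  let e : Option α ≃ α ⊕ PUnit.{1} := Equiv.optionEquivSumPUnit α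
  have he : ∀ o, Sum.elim w (fun _ => 0) (e o) = o.elim 0 w := by rintro (_ | _) <;> rfl
  rw [genFun_congr e he, genFun_sum, genFun_const, ← monomial_zero_one, add_comm]
  intro m
  exact Finite.of_equiv _ (e.subtypeEquiv (p := (·.elim 0 w = m)) fun o => by rw [he])

lemma genFun_shift (w : α → σ →₀ ℕ) (d : σ →₀ ℕ) :
    (genFun (fun a => d + w a) : MvPowerSeries σ R) = monomial d 1 * genFun w := by
  ext m
  rw [coeff_monomial_mul, coeff_genFun, coeff_genFun]
  split_ifs with hd
  · rw [one_mul, Nat.card_congr (Equiv.subtypeEquivRight fun a => ?_)]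
    rw [eq_tsub_iff_add_eq_of_le hd, add_comm]
  · have : IsEmpty {a // d + w a = m} := ⟨fun a => hd (a.2 ▸ le_self_add)⟩
    rw [Nat.card_of_isEmpty, Nat.cast_zero]

lemma genFun_prod {wα : α → σ →₀ ℕ} {wβ : β → σ →₀ ℕ}
    (hfin : ∀ m, Finite {p : α × β // wα p.1 + wβ p.2 = m}) :
    (genFun (fun p : α × β => wα p.1 + wβ p.2) : MvPowerSeries σ R) =
      genFun wα * genFun wβ := by
  classical
  ext m
  let e : {p : α × β // wα p.1 + wβ p.2 = m} ≃
      Σ x : antidiagonal m, {a // wα a = x.1.1} × {b // wβ b = x.1.2} :=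
    { toFun := fun p => ⟨⟨(wα p.1.1, wβ p.1.2), mem_antidiagonal.2 p.2⟩, ⟨p.1.1, rfl⟩, ⟨p.1.2, rfl⟩⟩
      invFun := fun x => ⟨(x.2.1.1, x.2.2.1), by
        rw [x.2.1.2, x.2.2.2]
        exact mem_antidiagonal.1 x.1.2⟩
      left_inv := fun p => rfl
      right_inv := by
        rintro ⟨⟨⟨x₁, x₂⟩, hx⟩, ⟨a, ha⟩, ⟨b, hb⟩⟩
        dsimp only at ha hb
        subst ha hb
        rfl }
  have := Finite.of_equiv _ e
  have (x : antidiagonal m) : Finite ({a // wα a = x.1.1} × {b // wβ b = x.1.2}) :=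
    Finite.of_injective _ (sigma_mk_injective (i := x)
      (β := fun x : antidiagonal m => {a // wα a = x.1.1} × {b // wβ b = x.1.2}))
  rw [coeff_mul, coeff_genFun, Nat.card_congr e, Nat.card_sigma, Nat.cast_sum,
    ← Finset.sum_coe_sort (antidiagonal m)]
  refine Fintype.sum_congr _ _ fun x => ?_
  rw [Nat.card_prod, Nat.cast_mul]
  rfl

end GeneratingFunction

lemma List.append_cons_inj_of_notMem_right {α : Type*} {u u' v v' : List α} {b : α}
    (hv : b ∉ v) (hv' : b ∉ v') (h : u ++ b :: v = u' ++ b :: v') : u = u' ∧ v = v' := by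
  rcases List.append_eq_append_iff.1 h with ⟨a, rfl, ha⟩ | ⟨a, rfl, ha⟩
  · cases a with
    | nil => simp_all
    | cons x a => simp only [List.cons_append, List.cons.injEq] at ha; simp_all
  · cases a with
    | nil => simp_all
    | cons x a => simp only [List.cons_append, List.cons.injEq] at ha; simp_all

inductive Zigzag : List ℕ → Prop
  | singleton (a : ℕ) : Zigzag [a]
  | cons {a b c : ℕ} {w : List ℕ} : b ≤ a → b < c → Zigzag (c :: w) → Zigzag (a :: b :: c :: w)

namespace Zigzag

lemma ne_nil {w : List ℕ} (hw : Zigzag w) : w ≠ [] := by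
  cases hw <;> simp

lemma append_cons {u v : List ℕ} {b : ℕ} (hu : Zigzag u) (hv : Zigzag v)
    (hbu : ∀ x ∈ u, b ≤ x) (hbv : ∀ x ∈ v, b < x) : Zigzag (u ++ b :: v) := by
  induction hu with
  | singleton a =>
    obtain ⟨c, v, rfl⟩ := List.exists_cons_of_ne_nil hv.ne_nil
    exact .cons (hbu a (by simp)) (hbv c (by simp)) hv
  | cons hba hbc _ ih =>
    exact .cons hba hbc (ih fun x hx => hbu x (by simp [hx]))

lemma exists_append_cons {w : List ℕ} {b : ℕ} (hw : Zigzag w) (hb : ∀ x ∈ w, b ≤ x)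
    (hbw : b ∈ w) (hne : w ≠ [b]) :
    ∃ u v, w = u ++ b :: v ∧ Zigzag u ∧ Zigzag v ∧ b ∉ v := by
  induction hw with
  | singleton a => simp_all
  | @cons a b' c t hba hbc htail ih =>
    by_cases hbt : b ∈ c :: t
    · have hct : c :: t ≠ [b] := by
        rintro ⟨⟩
        exact absurd hbc (not_lt.2 (hb b' (by simp)))
      obtain ⟨u, v, huv, hu, hv, hbv⟩ := ih (fun x hx => hb x (by simp [hx])) hbt hct
      obtain ⟨c', u, rfl⟩ := List.exists_cons_of_ne_nil hu.ne_nil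
      rw [List.cons_append, List.cons.injEq] at huv
      obtain ⟨rfl, rfl⟩ := huv
      exact ⟨a :: b' :: c :: u, v, rfl, .cons hba hbc hu, hv, hbv⟩
    · have hb' : b' = b := by
        have := hb a (by simp)
        have := hb b' (by simp)
        simp only [List.mem_cons, hbt, or_false] at hbw
        omega
      subst hb'
      exact ⟨[a], c :: t, rfl, .singleton a, htail, hbt⟩

lemma of_getD : ∀ {w : List ℕ}, Odd w.length →
    (∀ i, 2 * i + 1 < w.length → w.getD (2 * i + 1) 0 ≤ w.getD (2 * i) 0) →
    (∀ i, 2 * i + 2 < w.length → w.getD (2 * i + 1) 0 < w.getD (2 * i + 2) 0) → Zigzag w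
  | [], h, _, _ => absurd h (by decide)
  | [a], _, _, _ => .singleton a
  | [_, _], h, _, _ => absurd h (by simp)
  | a :: b :: c :: w, hodd, hle, hlt =>
    .cons (hle 0 (by simp)) (hlt 0 (by simp))
      (of_getD (by simpa [Nat.odd_add_one, parity_simps] using hodd)
        (fun i hi => hle (i + 1) (by simp at hi ⊢; omega))
        (fun i hi => hlt (i + 1) (by simp at hi ⊢; omega)))

end Zigzag

lemma zigzag_iff_getD {w : List ℕ} :
    Zigzag w ↔ Odd w.length ∧
      (∀ i, 2 * i + 1 < w.length → w.getD (2 * i + 1) 0 ≤ w.getD (2 * i) 0) ∧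
      (∀ i, 2 * i + 2 < w.length → w.getD (2 * i + 1) 0 < w.getD (2 * i + 2) 0) := by
  refine ⟨fun hw => ?_, fun ⟨hodd, hle, hlt⟩ => Zigzag.of_getD hodd hle hlt⟩
  induction hw with
  | singleton a => refine ⟨by simp, ?_, ?_⟩ <;> simp
  | cons hba hbc _ ih =>
    obtain ⟨hodd, hle, hlt⟩ := ih
    refine ⟨by simpa [Nat.odd_add_one, parity_simps] using hodd, ?_, ?_⟩
    · rintro (_ | i) hi
      · simpa using hba
      · simpa [Nat.mul_succ] using hle i (by simp at hi ⊢; omega)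
    · rintro (_ | i) hi
      · simpa using hbc
      · simpa [Nat.mul_succ] using hlt i (by simp at hi ⊢; omega)

lemma Zigzag.odd_length {w : List ℕ} (hw : Zigzag w) : Odd w.length :=
  (zigzag_iff_getD.1 hw).1

lemma mem_ribbonCells {n i j : ℕ} :
    (i, j) ∈ ribbonCells n ↔ 1 ≤ i ∧ 1 ≤ j ∧ n ≤ i + j ∧ i + j ≤ n + 1 := by
  simp only [ribbonCells, Finset.mem_filter, Finset.mem_product, Finset.mem_Icc]
  omega

/-- The `k`-th cell of δ_n/δ_{n-2} when the ribbon is read from its top-right cell `(1, n)` down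
to `(n, 1)`; the cell `(i, j)` is read at position `n - 1 + i - j`. -/
def readingCell (n k : ℕ) : ℕ × ℕ := (k / 2 + 1, n - (k + 1) / 2)

lemma readingCell_mem {n k : ℕ} (hk : k < 2 * n - 1) : readingCell n k ∈ ribbonCells n := by
  rw [readingCell, mem_ribbonCells]
  omega

lemma readingCell_sub {n i j : ℕ} (h : (i, j) ∈ ribbonCells n) :
    readingCell n (n - 1 + i - j) = (i, j) := by
  rw [mem_ribbonCells] at h
  rw [readingCell, Prod.mk.injEq]
  omega

lemma readingCell_two_mul (n i : ℕ) : readingCell n (2 * i) = (i + 1, n - i) := by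
  simp only [readingCell, Prod.mk.injEq]
  omega

lemma readingCell_two_mul_add_one (n i : ℕ) :
    readingCell n (2 * i + 1) = (i + 1, n - i - 1) := by
  simp only [readingCell, Prod.mk.injEq]
  omega

lemma ribbonCells_eq_image (n : ℕ) :
    ribbonCells n = (Finset.range (2 * n - 1)).image (readingCell n) := by
  ext ⟨i, j⟩
  simp only [Finset.mem_image, Finset.mem_range]
  refine ⟨fun h => ⟨n - 1 + i - j, ?_, readingCell_sub h⟩, ?_⟩
  · rw [mem_ribbonCells] at h
    omega
  · rintro ⟨k, hk, hkc⟩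
    exact hkc ▸ readingCell_mem hk

lemma readingCell_injOn (n : ℕ) : Set.InjOn (readingCell n) (Finset.range (2 * n - 1)) := by
  intro k hk l hl h
  simp only [Finset.coe_range, Set.mem_Iio, readingCell, Prod.mk.injEq] at hk hl h
  omega

namespace RibbonSSYT

variable {n lo : ℕ}

lemma sigma_ext {p q : (n : ℕ) × RibbonSSYT n lo} (h : p.1 = q.1)
    (h' : p.2.entry = q.2.entry) : p = q := by
  obtain ⟨n, ⟨e, _, _, _, _⟩⟩ := p
  obtain ⟨m, ⟨e', _, _, _, _⟩⟩ := q
  dsimp only at h h'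
  subst h h'
  rfl

def word (T : RibbonSSYT n lo) : List ℕ :=
  (List.range (2 * n - 1)).map (T.entry ∘ readingCell n)

lemma length_word (T : RibbonSSYT n lo) : T.word.length = 2 * n - 1 := by
  simp [word]

lemma getD_word (T : RibbonSSYT n lo) {k : ℕ} (hk : k < 2 * n - 1) :
    T.word.getD k 0 = T.entry (readingCell n k) := by
  simp [word, hk]

lemma coe_word (T : RibbonSSYT n lo) :
    (T.word : Multiset ℕ) = (ribbonCells n).val.map T.entry := by
  rw [ribbonCells_eq_image, Finset.image_val_of_injOn (readingCell_injOn n), Multiset.map_map,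
    word, ← Multiset.map_coe, Finset.range_val, Multiset.range]

lemma toFinsupp_word (T : RibbonSSYT n lo) (k : ℕ) :
    Multiset.toFinsupp (T.word : Multiset ℕ) k = ((ribbonCells n).filter (T.entry · = k)).card := by
  rw [Multiset.toFinsupp_apply, coe_word, Multiset.count_map, Finset.card_def, Finset.filter_val]
  simp only [eq_comm]

lemma le_of_mem_word (T : RibbonSSYT n lo) : ∀ x ∈ T.word, lo ≤ x := by
  simp only [word, List.mem_map, List.mem_range, Function.comp_apply]
  rintro _ ⟨k, hk, rfl⟩
  exact T.lo_le _ (readingCell_mem hk)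

lemma zigzag_word (T : RibbonSSYT n lo) (hn : 1 ≤ n) : Zigzag T.word := by
  rw [zigzag_iff_getD, length_word]
  refine ⟨⟨n - 1, by omega⟩, fun i hi => ?_, fun i hi => ?_⟩
  · rw [T.getD_word hi, T.getD_word (by omega), readingCell_two_mul_add_one,
      readingCell_two_mul]
    have h := T.rowWeak (i + 1) (n - i - 1) (by rw [mem_ribbonCells]; omega)
      (by rw [mem_ribbonCells]; omega)
    rwa [show n - i - 1 + 1 = n - i by omega] at h
  · rw [T.getD_word (by omega), T.getD_word hi, readingCell_two_mul_add_one,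
      show 2 * i + 2 = 2 * (i + 1) by ring, readingCell_two_mul]
    exact T.colStrict (i + 1) (n - i - 1) (by rw [mem_ribbonCells]; omega)
      (by rw [mem_ribbonCells]; omega)

def ofWord (w : List ℕ) (hw : Zigzag w) (hlo : ∀ x ∈ w, lo ≤ x) :
    RibbonSSYT ((w.length + 1) / 2) lo where
  entry c := if c ∈ ribbonCells ((w.length + 1) / 2) then
    w.getD ((w.length + 1) / 2 - 1 + c.1 - c.2) 0 else 0
  lo_le := by
    rintro ⟨i, j⟩ hc
    have := mem_ribbonCells.1 hc
    obtain ⟨r, hr⟩ := hw.odd_length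
    rw [if_pos hc, List.getD_eq_getElem _ _ (by omega)]
    exact hlo _ (List.getElem_mem _)
  outside c hc := if_neg hc
  rowWeak i j hc hc' := by
    have := mem_ribbonCells.1 hc
    have := mem_ribbonCells.1 hc'
    obtain ⟨r, hr⟩ := hw.odd_length
    have h := (zigzag_iff_getD.1 hw).2.1 (i - 1) (by omega)
    rw [if_pos hc, if_pos hc']
    rwa [show 2 * (i - 1) + 1 = (w.length + 1) / 2 - 1 + i - j by omega,
      show 2 * (i - 1) = (w.length + 1) / 2 - 1 + i - (j + 1) by omega] at h
  colStrict i j hc hc' := by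
    have := mem_ribbonCells.1 hc
    have := mem_ribbonCells.1 hc'
    obtain ⟨r, hr⟩ := hw.odd_length
    have h := (zigzag_iff_getD.1 hw).2.2 (i - 1) (by omega)
    rw [if_pos hc, if_pos hc']
    rwa [show 2 * (i - 1) + 1 = (w.length + 1) / 2 - 1 + i - j by omega,
      show 2 * (i - 1) + 2 = (w.length + 1) / 2 - 1 + (i + 1) - j by omega] at h

lemma word_ofWord (w : List ℕ) (hw : Zigzag w) (hlo : ∀ x ∈ w, lo ≤ x) :
    (ofWord w hw hlo).word = w := by
  obtain ⟨r, hr⟩ := hw.odd_length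
  have hlen : (ofWord w hw hlo).word.length = w.length := by rw [length_word]; omega
  refine List.ext_getElem hlen fun k hk _ => ?_
  rw [← List.getD_eq_getElem _ 0, getD_word _ (by omega), ← List.getD_eq_getElem _ 0]
  simp only [ofWord, if_pos (readingCell_mem (show k < 2 * ((w.length + 1) / 2) - 1 by omega))]
  congr 1
  simp only [readingCell]
  omega

lemma entry_ofWord_word (T : RibbonSSYT n lo) (hn : 1 ≤ n) :
    (ofWord T.word (T.zigzag_word hn) T.le_of_mem_word).entry = T.entry := by
  have hn' : (T.word.length + 1) / 2 = n := by rw [length_word]; omega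
  funext ⟨i, j⟩
  simp only [ofWord, hn']
  split_ifs with hc
  · have := mem_ribbonCells.1 hc
    rw [getD_word _ (by omega), readingCell_sub hc]
  · exact (T.outside _ hc).symm

end RibbonSSYT

abbrev ZigzagWord (lo : ℕ) := {w : List ℕ // Zigzag w ∧ ∀ x ∈ w, lo ≤ x}

def ribbonSSYTEquivZigzagWord (lo : ℕ) :
    {p : (n : ℕ) × RibbonSSYT n lo // 1 ≤ p.1} ≃ ZigzagWord lo where
  toFun p := ⟨p.1.2.word, p.1.2.zigzag_word p.2, p.1.2.le_of_mem_word⟩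
  invFun w := ⟨⟨_, .ofWord w.1 w.2.1 w.2.2⟩, by have := w.2.1.odd_length; grind⟩
  left_inv p := Subtype.ext <| RibbonSSYT.sigma_ext
    (by have := p.2; simp only [RibbonSSYT.length_word]; omega)
    (RibbonSSYT.entry_ofWord_word _ p.2)
  right_inv w := Subtype.ext (RibbonSSYT.word_ofWord w.1 w.2.1 w.2.2)

namespace ZigzagWord

def content {lo : ℕ} (w : ZigzagWord lo) : ℕ →₀ ℕ :=
  Multiset.toFinsupp (w.1 : Multiset ℕ)

lemma finite_content_eq (lo : ℕ) (m : ℕ →₀ ℕ) : Finite {w : ZigzagWord lo // w.content = m} := by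
  have hmem (w : {w : ZigzagWord lo // w.content = m}) :
      w.1.1 ∈ (Multiset.lists (Finsupp.toMultiset m)).toFinset := by
    obtain ⟨w, rfl⟩ := w
    rw [Multiset.mem_toFinset, Multiset.mem_lists_iff]
    simp only [content, Multiset.toFinsupp_toMultiset]
    rfl
  exact Finite.of_injective (fun w => (⟨w.1.1, hmem w⟩ : (Multiset.lists _).toFinset))
    fun w w' h => Subtype.ext (Subtype.ext (Subtype.mk.inj h))

end ZigzagWord

lemma F_eq_genFun (lo : ℕ) : F lo = genFun (ZigzagWord.content (lo := lo)) := by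
  ext m
  rw [coeff_genFun]
  refine congrArg Nat.cast (Nat.card_congr ?_)
  refine (Equiv.subtypeSubtypeEquivSubtypeInter _ _).symm.trans
    ((ribbonSSYTEquivZigzagWord lo).subtypeEquiv fun p => ?_)
  simp only [ribbonSSYTEquivZigzagWord, Equiv.coe_fn_mk, ZigzagWord.content, Finsupp.ext_iff,
    RibbonSSYT.toFinsupp_word]

namespace ZigzagWord

def glue : ZigzagWord 2 ⊕ Option (ZigzagWord 1 × ZigzagWord 2) → ZigzagWord 1
  | .inl v => ⟨v.1, v.2.1, fun x hx => one_le_two.trans (v.2.2 x hx)⟩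
  | .inr none => ⟨[1], .singleton 1, by simp⟩
  | .inr (some (u, v)) => ⟨u.1 ++ 1 :: v.1, u.2.1.append_cons v.2.1 u.2.2 v.2.2, by
      simp only [List.mem_append, List.mem_cons]
      rintro x (hx | rfl | hx)
      exacts [u.2.2 x hx, le_rfl, one_le_two.trans (v.2.2 x hx)]⟩

lemma content_glue (x : ZigzagWord 2 ⊕ Option (ZigzagWord 1 × ZigzagWord 2)) :
    (glue x).content = Sum.elim content
      (fun o => Finsupp.single 1 1 + o.elim 0 fun p => p.1.content + p.2.content) x := by
  rcases x with v | _ | ⟨u, v⟩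
  · rfl
  · simp [glue, content]
  · simp only [glue, content, Sum.elim_inr, Option.elim_some, ← Multiset.coe_add,
      ← Multiset.cons_coe, ← Multiset.singleton_add, Multiset.toFinsupp_add,
      Multiset.toFinsupp_singleton]
    abel

lemma one_mem_glue_inr (o : Option (ZigzagWord 1 × ZigzagWord 2)) : 1 ∈ (glue (.inr o)).1 := by
  rcases o with _ | ⟨u, v⟩ <;> simp [glue]

lemma one_notMem (v : ZigzagWord 2) : 1 ∉ v.1 := fun h => by simpa using v.2.2 1 h

lemma glue_inl_ne_inr (v : ZigzagWord 2) (o : Option (ZigzagWord 1 × ZigzagWord 2)) :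
    glue (.inl v) ≠ glue (.inr o) := fun h =>
  one_notMem v (show 1 ∈ (glue (.inl v)).1 from h ▸ one_mem_glue_inr o)

lemma glue_none_ne_some (p : ZigzagWord 1 × ZigzagWord 2) :
    glue (.inr none) ≠ glue (.inr (some p)) := fun h => by
  have hlen := congrArg (fun w : ZigzagWord 1 => w.1.length) h
  simp only [glue, List.length_append, List.length_cons, List.length_nil] at hlen
  exact p.1.2.1.ne_nil (List.length_eq_zero_iff.1 (by omega))

lemma glue_injective : Function.Injective glue := by
  rintro (v | _ | ⟨u, v⟩) (v' | _ | ⟨u', v'⟩) h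
  · exact congrArg Sum.inl (Subtype.ext (congrArg Subtype.val h :))
  · exact (glue_inl_ne_inr _ _ h).elim
  · exact (glue_inl_ne_inr _ _ h).elim
  · exact (glue_inl_ne_inr _ _ h.symm).elim
  · rfl
  · exact (glue_none_ne_some _ h).elim
  · exact (glue_inl_ne_inr _ _ h.symm).elim
  · exact (glue_none_ne_some _ h.symm).elim
  · obtain ⟨hu, hv⟩ := List.append_cons_inj_of_notMem_right (one_notMem v) (one_notMem v')
      (congrArg Subtype.val h)
    rw [Subtype.ext hu, Subtype.ext hv]

lemma glue_surjective : Function.Surjective glue := by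
  rintro ⟨w, hw, h1⟩
  by_cases hmem : 1 ∈ w
  · by_cases hw1 : w = [1]
    · exact ⟨.inr none, Subtype.ext hw1.symm⟩
    obtain ⟨u, v, rfl, hu, hv, h1v⟩ := hw.exists_append_cons h1 hmem hw1
    refine ⟨.inr (some (⟨u, hu, fun x hx => h1 x (by simp [hx])⟩, ⟨v, hv, fun x hx => ?_⟩)), rfl⟩
    exact (h1 x (by simp [hx])).lt_of_ne (fun h => h1v (h ▸ hx))
  · exact ⟨.inl ⟨w, hw, fun x hx => (h1 x hx).lt_of_ne (fun h => hmem (h ▸ hx))⟩, rfl⟩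

lemma genFun_content_one {R : Type*} [Semiring R] :
    (genFun (content (lo := 1)) : MvPowerSeries ℕ R) =
      genFun (content (lo := 2)) + MvPowerSeries.X 1 *
        (1 + genFun (content (lo := 1)) * genFun (content (lo := 2))) := by
  have hS := finite_fiber_of_injective glue_injective 0 (fun x => by rw [zero_add, content_glue])
    (finite_content_eq 1)
  have hO := finite_fiber_of_injective Sum.inr_injective _ (fun _ => rfl) hS
  have hP := finite_fiber_of_injective (Option.some_injective _) 0 (fun _ => (zero_add _).symm) hO
  refine (genFun_congr (.ofBijective _ ⟨glue_injective, glue_surjective⟩)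
    content_glue).symm.trans ?_
  rw [genFun_sum hS, genFun_shift, genFun_option hO, genFun_prod hP, MvPowerSeries.X_def]

end ZigzagWord

/-- The functional equation 𝓕(x₁,x₂,…) - 𝓕(x₂,x₃,…) = x₁ + x₁·𝓕(x₂,x₃,…)·𝓕(x₁,x₂,…). -/
theorem ribbon_generating_function_equation :
    F 1 - F 2 = (MvPowerSeries.X 1 : MvPowerSeries ℕ ℚ) + MvPowerSeries.X 1 * F 2 * F 1 := by
  have h := ZigzagWord.genFun_content_one (R := ℚ)
  rw [← F_eq_genFun, ← F_eq_genFun] at h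
  linear_combination h

end
end

section
/- For every partition μ contained in the staircase δ_n, every border strip (connected skew shape with no 2×2 square) contained in the skew shape δ_n/μ whose removal from δ_n/μ leaves a valid skew shape has odd size. -/
/-!
STATEMENT 3: For every partition μ ⊆ δ_n, every border strip (nonempty connected skew
shape with no 2×2 square) contained in δ_n/μ whose removal from δ_n/μ leaves a valid
skew shape (λ'/μ for some partition λ' with μ ⊆ λ' ⊆ δ_n) has odd size.

Rows and columns are 0-indexed: row `i` of δ_n has the cells `(i, j)` with `j < n - i`.
-/

/-- The cells of the skew shape δ_n/μ, where μ is given by its row lengths. -/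
def skewStaircase (n : ℕ) (μ : ℕ → ℕ) : Finset (ℕ × ℕ) :=
  (Finset.range n ×ˢ Finset.range n).filter
    (fun c => μ c.1 ≤ c.2 ∧ c.2 < n - c.1)

/-- Two cells are (edge-)adjacent. -/
def CellAdj (c d : ℕ × ℕ) : Prop :=
  (c.1 = d.1 ∧ (c.2 = d.2 + 1 ∨ d.2 = c.2 + 1)) ∨
  (c.2 = d.2 ∧ (c.1 = d.1 + 1 ∨ d.1 = c.1 + 1))

/-- A finite set of cells is connected: any two of its cells are joined by a path of
adjacent cells inside the set. -/
def CellConnected (B : Finset (ℕ × ℕ)) : Prop :=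
  ∀ c ∈ B, ∀ d ∈ B,
    Relation.ReflTransGen (fun a b => a ∈ B ∧ b ∈ B ∧ CellAdj a b) c d

/-- A set of cells contains no 2×2 square. -/
def NoTwoByTwo (B : Finset (ℕ × ℕ)) : Prop :=
  ¬ ∃ i j, (i, j) ∈ B ∧ (i + 1, j) ∈ B ∧ (i, j + 1) ∈ B ∧ (i + 1, j + 1) ∈ B

/-!
Removing `B` leaves `λ'/μ`, so `B` is itself the skew shape `δ_n/λ'`, spanning rows `r ≤ s`.
Connectivity forces consecutive rows `i, i + 1` of `B` (for `r ≤ i < s`) to share a column;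
then row `i` of `δ_n/λ'` has length at least 2, and without a 2×2 square exactly 2. The last
row has length 1, since otherwise `λ'_{s+1} ≤ λ'_s` would leave a cell of `B` in row `s + 1`.
Hence `|B| = 2 (s - r) + 1`.
-/

open Finset

lemma mem_skewStaircase {n : ℕ} {μ : ℕ → ℕ} {c : ℕ × ℕ} :
    c ∈ skewStaircase n μ ↔ μ c.1 ≤ c.2 ∧ c.2 < n - c.1 := by
  simp only [skewStaircase, mem_filter, mem_product, mem_range]
  omega

lemma eq_skewStaircase_of_sdiff {n : ℕ} {μ lam : ℕ → ℕ} {B : Finset (ℕ × ℕ)}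
    (hB : B ⊆ skewStaircase n μ) (hμ : ∀ i, μ i ≤ lam i)
    (hrest : ∀ c : ℕ × ℕ, (c ∈ skewStaircase n μ ∧ c ∉ B) ↔ (μ c.1 ≤ c.2 ∧ c.2 < lam c.1)) :
    B = skewStaircase n lam := by
  ext c
  have hμc := hμ c.1
  rw [mem_skewStaircase]
  constructor
  · intro hc
    have hcμ := mem_skewStaircase.1 (hB hc)
    have hnot : ¬ (μ c.1 ≤ c.2 ∧ c.2 < lam c.1) := fun h => ((hrest c).2 h).2 hc
    omega
  · intro hc
    by_contra hcB
    have hleft := (hrest c).1 ⟨mem_skewStaircase.2 ⟨by omega, hc.2⟩, hcB⟩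
    omega

lemma exists_vertical_pair_of_reflTransGen {B : Finset (ℕ × ℕ)} {c d : ℕ × ℕ}
    (h : Relation.ReflTransGen (fun a b => a ∈ B ∧ b ∈ B ∧ CellAdj a b) c d) {i : ℕ}
    (hci : c.1 ≤ i) (hid : i < d.1) : ∃ j, (i, j) ∈ B ∧ (i + 1, j) ∈ B := by
  induction h with
  | refl => omega
  | @tail b e _ hbe ih =>
    obtain ⟨hb, he, hadj⟩ := hbe
    by_cases hib : i < b.1
    · exact ih hib
    rcases hadj with ⟨hrow, -⟩ | ⟨hcol, hup | hdown⟩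
    · omega
    · omega
    · obtain rfl : i = b.1 := by omega
      exact ⟨b.2, hb, by rwa [← hdown, hcol]⟩

lemma CellConnected.exists_vertical_pair {B : Finset (ℕ × ℕ)} (hB : CellConnected B)
    {c d : ℕ × ℕ} (hc : c ∈ B) (hd : d ∈ B) {i : ℕ} (hci : c.1 ≤ i) (hid : i < d.1) :
    ∃ j, (i, j) ∈ B ∧ (i + 1, j) ∈ B :=
  exists_vertical_pair_of_reflTransGen (hB c hc d hd) hci hid

section RowLengths

variable {n : ℕ} {lam : ℕ → ℕ}

lemma card_skewStaircase_eq_sum {r s : ℕ}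
    (hrows : ∀ c ∈ skewStaircase n lam, c.1 ∈ Icc r s) :
    (skewStaircase n lam).card = ∑ i ∈ Icc r s, (n - i - lam i) := by
  rw [card_eq_sum_card_fiberwise hrows]
  refine sum_congr rfl fun i _ => ?_
  have hfiber : (skewStaircase n lam).filter (fun c => c.1 = i) =
      (Ico (lam i) (n - i)).map ⟨Prod.mk i, Prod.mk_right_injective i⟩ := by
    ext ⟨a, b⟩
    simp only [mem_filter, mem_skewStaircase, mem_map, mem_Ico, Function.Embedding.coeFn_mk,
      Prod.mk.injEq]
    constructor
    · rintro ⟨hb, rfl⟩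
      exact ⟨b, hb, rfl, rfl⟩
    · rintro ⟨b, hb, rfl, rfl⟩
      exact ⟨hb, rfl⟩
  rw [hfiber, card_map, Nat.card_Ico]

lemma row_length_eq_two_of_vertical_pair (hlam : ∀ i, lam (i + 1) ≤ lam i)
    (h22 : NoTwoByTwo (skewStaircase n lam)) {i j : ℕ}
    (hij : (i, j) ∈ skewStaircase n lam) (hij' : (i + 1, j) ∈ skewStaircase n lam) :
    n - i - lam i = 2 := by
  simp only [mem_skewStaircase] at hij hij'
  have hmono := hlam i
  by_contra hne
  refine h22 ⟨i, n - i - 3, ?_, ?_, ?_, ?_⟩ <;> simp only [mem_skewStaircase] <;> omega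

lemma row_length_eq_one_of_last_row (hlam : ∀ i, lam (i + 1) ≤ lam i) {s j : ℕ}
    (hs : (s, j) ∈ skewStaircase n lam) (hlast : ∀ c ∈ skewStaircase n lam, c.1 ≤ s) :
    n - s - lam s = 1 := by
  simp only [mem_skewStaircase] at hs
  have hmono := hlam s
  by_contra hne
  have hnext := hlast (s + 1, lam (s + 1)) (by simp only [mem_skewStaircase]; omega)
  omega

theorem odd_card_skewStaircase (hlam : ∀ i, lam (i + 1) ≤ lam i)
    (hne : (skewStaircase n lam).Nonempty) (hconn : CellConnected (skewStaircase n lam))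
    (h22 : NoTwoByTwo (skewStaircase n lam)) : Odd (skewStaircase n lam).card := by
  obtain ⟨top, htop, hfirst⟩ := (skewStaircase n lam).exists_min_image Prod.fst hne
  obtain ⟨bot, hbot, hlast⟩ := (skewStaircase n lam).exists_max_image Prod.fst hne
  have hrs : top.1 ≤ bot.1 := hfirst bot hbot
  have hinner : ∀ i ∈ Ico top.1 bot.1, n - i - lam i = 2 := fun i hi => by
    rw [mem_Ico] at hi
    obtain ⟨j, hj, hj'⟩ := hconn.exists_vertical_pair htop hbot hi.1 hi.2
    exact row_length_eq_two_of_vertical_pair hlam h22 hj hj'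
  have hbottom : n - bot.1 - lam bot.1 = 1 := row_length_eq_one_of_last_row hlam hbot hlast
  rw [card_skewStaircase_eq_sum fun c hc => mem_Icc.2 ⟨hfirst c hc, hlast c hc⟩,
    ← Ico_add_one_right_eq_Icc, sum_Ico_succ_top (by omega), sum_congr rfl hinner, hbottom,
    sum_const, Nat.card_Ico, smul_eq_mul]
  exact ⟨bot.1 - top.1, by ring⟩

end RowLengths

theorem borderStrip_in_staircase_odd_general
    (n : ℕ) (μ : ℕ → ℕ)
    (B : Finset (ℕ × ℕ))
    (hBsub : B ⊆ skewStaircase n μ)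
    (hBne : B.Nonempty)
    (hconn : CellConnected B)
    (h22 : NoTwoByTwo B)
    -- removing B from δ_n/μ leaves a skew shape λ'/μ with μ ⊆ λ' ⊆ δ_n:
    (hremove : ∃ lam' : ℕ → ℕ,
      (∀ i, lam' (i + 1) ≤ lam' i) ∧ (∀ i, μ i ≤ lam' i) ∧ (∀ i, lam' i ≤ n - i) ∧
      ∀ c : ℕ × ℕ, (c ∈ skewStaircase n μ ∧ c ∉ B) ↔ (μ c.1 ≤ c.2 ∧ c.2 < lam' c.1)) :
    Odd B.card := by
  obtain ⟨lam', hdec, hμ, -, hrest⟩ := hremove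
  obtain rfl := eq_skewStaircase_of_sdiff hBsub hμ hrest
  exact odd_card_skewStaircase hdec hBne hconn h22

theorem borderStrip_in_staircase_odd
    (n : ℕ) (μ : ℕ → ℕ)
    (hμ_dec : ∀ i, μ (i + 1) ≤ μ i)              -- μ is a partition
    (hμ_sub : ∀ i, μ i ≤ n - i)                  -- μ ⊆ δ_n
    (B : Finset (ℕ × ℕ))
    (hBsub : B ⊆ skewStaircase n μ)
    (hBne : B.Nonempty)
    (hconn : CellConnected B)
    (h22 : NoTwoByTwo B)
    -- removing B from δ_n/μ leaves a skew shape λ'/μ with μ ⊆ λ' ⊆ δ_n: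
    (hremove : ∃ lam' : ℕ → ℕ,
      (∀ i, lam' (i + 1) ≤ lam' i) ∧ (∀ i, μ i ≤ lam' i) ∧ (∀ i, lam' i ≤ n - i) ∧
      ∀ c : ℕ × ℕ, (c ∈ skewStaircase n μ ∧ c ∉ B) ↔ (μ c.1 ≤ c.2 ∧ c.2 < lam' c.1)) :
    Odd B.card :=
  borderStrip_in_staircase_odd_general n μ B hBsub hBne hconn h22 hremove
end

section
/- In a permutation w of {1,…,n} (viewed as a word), a value i with 1 < i < n is a peak if and only if both i-1 and i+1 occur before i in the word; moreover, this property of each value i is invariant under the Sagan–Worley relations: (1) swapping the first two letters a,b with a<b; (2) replacing a factor b a c by b c a where a<b<c; (3) replacing a factor c a b by a c b where a<b<c. -/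
/-!
STATEMENT 7: For a permutation `w` of {1, …, n} viewed as a word, a value `i`
(with `2 ≤ i ≤ n - 1`) is a peak iff both `i - 1` and `i + 1` occur before `i` in `w`;
and this property is invariant under each of the three Sagan–Worley elementary moves:
(1) `a b ⋯ ↦ b a ⋯` for `a < b`;
(2) `⋯ b a c ⋯ ↦ ⋯ b c a ⋯` for `a < b < c`;
(3) `⋯ c a b ⋯ ↦ ⋯ a c b ⋯` for `a < b < c`.
-/

/-- `w` is a permutation of `{1, …, n}` written as a word. -/
def IsPermWord (n : ℕ) (w : List ℕ) : Prop := w.Perm (List.range' 1 n)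

/-- `x` occurs (strictly) before `y` in the word `w`. -/
def Before (w : List ℕ) (x y : ℕ) : Prop := w.idxOf x < w.idxOf y

/-- The value `i` is a peak of the word `w`: both `i - 1` and `i + 1` occur before `i`. -/
def IsPeak (w : List ℕ) (i : ℕ) : Prop := Before w (i - 1) i ∧ Before w (i + 1) i

lemma idx_eq_or (u v m m' : List ℕ) (hmm : m.Perm m')
    (hnd : (u ++ m ++ v).Nodup) (x : ℕ) (hx : x ∈ u ++ m ++ v) :
    (x ∈ m ∧ (u ++ m ++ v).idxOf x = u.length + m.idxOf x
      ∧ (u ++ m' ++ v).idxOf x = u.length + m'.idxOf x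
      ∧ m.idxOf x < m.length ∧ m'.idxOf x < m'.length)
    ∨ (x ∉ m ∧ (u ++ m ++ v).idxOf x = (u ++ m' ++ v).idxOf x
      ∧ ((u ++ m ++ v).idxOf x < u.length
         ∨ u.length + m.length ≤ (u ++ m ++ v).idxOf x)) := by
  rw [List.append_assoc] at hnd hx ⊢
  rw [List.append_assoc]
  rw [List.nodup_append] at hnd
  obtain ⟨hu, hmv, hud⟩ := hnd
  by_cases hxu : x ∈ u
  · right
    have hnm : x ∉ m := fun h => hud x hxu x (List.mem_append_left _ h) rfl
    rw [List.idxOf_append_of_mem hxu, List.idxOf_append_of_mem hxu]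
    exact ⟨hnm, rfl, Or.inl (List.idxOf_lt_length_iff.mpr hxu)⟩
  · have hxmv : x ∈ m ++ v := by
      rcases List.mem_append.mp hx with h | h
      · exact absurd h hxu
      · exact h
    rw [List.idxOf_append_of_notMem hxu, List.idxOf_append_of_notMem hxu]
    by_cases hxm : x ∈ m
    · left
      have hxm' : x ∈ m' := hmm.mem_iff.mp hxm
      rw [List.idxOf_append_of_mem hxm, List.idxOf_append_of_mem hxm']
      exact ⟨hxm, rfl, rfl, List.idxOf_lt_length_iff.mpr hxm, List.idxOf_lt_length_iff.mpr hxm'⟩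
    · right
      have hxm' : x ∉ m' := fun h => hxm (hmm.mem_iff.mpr h)
      rw [List.idxOf_append_of_notMem hxm, List.idxOf_append_of_notMem hxm']
      refine ⟨hxm, ?_, Or.inr ?_⟩
      · rw [hmm.length_eq]
      · omega

lemma before_congr (u v m m' : List ℕ) (hmm : m.Perm m')
    (hnd : (u ++ m ++ v).Nodup) (x y : ℕ)
    (hx : x ∈ u ++ m ++ v) (hy : y ∈ u ++ m ++ v)
    (hspec : x ∈ m → y ∈ m →
      (m.idxOf x < m.idxOf y ↔ m'.idxOf x < m'.idxOf y)) :
    Before (u ++ m ++ v) x y ↔ Before (u ++ m' ++ v) x y := by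
  have hmlen := hmm.length_eq
  unfold Before
  rcases idx_eq_or u v m m' hmm hnd x hx with ⟨hxm, e1, e2, b1, b2⟩ | ⟨hxm, e, hb⟩ <;>
    rcases idx_eq_or u v m m' hmm hnd y hy with ⟨hym, f1, f2, c1, c2⟩ | ⟨hym, f, hc⟩
  · have := hspec hxm hym; omega
  · omega
  · omega
  · omega

lemma move_generic (n : ℕ) (u v m m' : List ℕ) (hmm : m.Perm m')
    (hp : (u ++ m ++ v).Perm (List.range' 1 n)) (i : ℕ) (h2 : 2 ≤ i) (hn : i + 1 ≤ n)
    (hspec : ∀ x y : ℕ, (x + 1 = y ∨ y + 1 = x) → x ∈ m → y ∈ m →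
      (m.idxOf x < m.idxOf y ↔ m'.idxOf x < m'.idxOf y)) :
    IsPeak (u ++ m ++ v) i ↔ IsPeak (u ++ m' ++ v) i := by
  have hnd : (u ++ m ++ v).Nodup := hp.nodup_iff.mpr (List.nodup_range' (s := 1) (n := n))
  have mem : ∀ j, 1 ≤ j → j ≤ n → j ∈ u ++ m ++ v := fun j h1 hj =>
    hp.mem_iff.mpr (List.mem_range'_1.mpr ⟨h1, by omega⟩)
  unfold IsPeak
  exact and_congr
    (before_congr u v m m' hmm hnd _ _ (mem _ (by omega) (by omega))
      (mem _ (by omega) (by omega)) (hspec _ _ (by omega)))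
    (before_congr u v m m' hmm hnd _ _ (mem _ (by omega) (by omega))
      (mem _ (by omega) (by omega)) (hspec _ _ (by omega)))

lemma spec2 (a b c x y : ℕ) (hab : a < b) (hbc : b < c)
    (hadj : x + 1 = y ∨ y + 1 = x)
    (hx : x ∈ [b, a, c]) (hy : y ∈ [b, a, c]) :
    ([b,a,c].idxOf x < [b,a,c].idxOf y ↔ [b,c,a].idxOf x < [b,c,a].idxOf y) := by
  have e1 : [b,a,c].idxOf b = 0 := by simp
  have e2 : [b,a,c].idxOf a = 1 := by
    rw [List.idxOf_cons_ne _ (by omega : b ≠ a)]; simp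
  have e3 : [b,a,c].idxOf c = 2 := by
    rw [List.idxOf_cons_ne _ (by omega : b ≠ c), List.idxOf_cons_ne _ (by omega : a ≠ c)]; simp
  have f1 : [b,c,a].idxOf b = 0 := by simp
  have f2 : [b,c,a].idxOf c = 1 := by
    rw [List.idxOf_cons_ne _ (by omega : b ≠ c)]; simp
  have f3 : [b,c,a].idxOf a = 2 := by
    rw [List.idxOf_cons_ne _ (by omega : b ≠ a), List.idxOf_cons_ne _ (by omega : c ≠ a)]; simp
  simp only [List.mem_cons, List.not_mem_nil, or_false, List.mem_singleton] at hx hy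
  rcases hx with rfl | rfl | rfl <;> rcases hy with rfl | rfl | rfl <;> omega

lemma spec3 (a b c x y : ℕ) (hab : a < b) (hbc : b < c)
    (hadj : x + 1 = y ∨ y + 1 = x)
    (hx : x ∈ [c, a, b]) (hy : y ∈ [c, a, b]) :
    ([c,a,b].idxOf x < [c,a,b].idxOf y ↔ [a,c,b].idxOf x < [a,c,b].idxOf y) := by
  have e1 : [c,a,b].idxOf c = 0 := by simp
  have e2 : [c,a,b].idxOf a = 1 := by
    rw [List.idxOf_cons_ne _ (by omega : c ≠ a)]; simp
  have e3 : [c,a,b].idxOf b = 2 := by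
    rw [List.idxOf_cons_ne _ (by omega : c ≠ b), List.idxOf_cons_ne _ (by omega : a ≠ b)]; simp
  have f1 : [a,c,b].idxOf a = 0 := by simp
  have f2 : [a,c,b].idxOf c = 1 := by
    rw [List.idxOf_cons_ne _ (by omega : a ≠ c)]; simp
  have f3 : [a,c,b].idxOf b = 2 := by
    rw [List.idxOf_cons_ne _ (by omega : a ≠ b), List.idxOf_cons_ne _ (by omega : c ≠ b)]; simp
  simp only [List.mem_cons, List.not_mem_nil, or_false, List.mem_singleton] at hx hy
  rcases hx with rfl | rfl | rfl <;> rcases hy with rfl | rfl | rfl <;> omega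

lemma move1 (n a b : ℕ) (u : List ℕ) (hab : a < b)
    (hp : (a :: b :: u).Perm (List.range' 1 n)) (i : ℕ) (h2 : 2 ≤ i) (hn : i + 1 ≤ n) :
    IsPeak (a :: b :: u) i ↔ IsPeak (b :: a :: u) i := by
  have hp' : (([] : List ℕ) ++ [a, b] ++ u).Perm (List.range' 1 n) := hp
  have hnd : (([] : List ℕ) ++ [a, b] ++ u).Nodup := hp'.nodup_iff.mpr (List.nodup_range' (s := 1) (n := n))
  have mem : ∀ j, 1 ≤ j → j ≤ n → j ∈ ([] : List ℕ) ++ [a, b] ++ u := fun j h1 hj =>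
    hp'.mem_iff.mpr (List.mem_range'_1.mpr ⟨h1, by omega⟩)
  have hmm : ([a, b] : List ℕ).Perm [b, a] := List.Perm.swap b a []
  have l0 : ([] : List ℕ).length = 0 := rfl
  have l2 : ([a, b] : List ℕ).length = 2 := rfl
  show IsPeak (([] : List ℕ) ++ [a, b] ++ u) i ↔ IsPeak (([] : List ℕ) ++ [b, a] ++ u) i
  by_cases hia : i = a
  · subst hia
    rcases idx_eq_or [] u [i, b] [b, i] hmm hnd (i - 1) (mem _ (by omega) (by omega))
      with ⟨hm, -⟩ | ⟨-, e, hb⟩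
    · exfalso; simp only [List.mem_cons, List.not_mem_nil, or_false] at hm; omega
    · rcases idx_eq_or [] u [i, b] [b, i] hmm hnd i (mem _ (by omega) (by omega))
        with ⟨him, e1, e2, b1, b2⟩ | ⟨him, -⟩
      · constructor <;> rintro ⟨h1, -⟩ <;> exact absurd h1 (by unfold Before; simp only [List.length_cons, List.length_nil] at *; omega)
      · exact absurd (by simp : i ∈ [i, b]) him
  · by_cases hib : i = b
    · subst hib
      rcases idx_eq_or [] u [a, i] [i, a] hmm hnd (i + 1) (mem _ (by omega) (by omega))
        with ⟨hm, -⟩ | ⟨-, e, hb⟩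
      · exfalso; simp only [List.mem_cons, List.not_mem_nil, or_false] at hm; omega
      · rcases idx_eq_or [] u [a, i] [i, a] hmm hnd i (mem _ (by omega) (by omega))
          with ⟨him, e1, e2, b1, b2⟩ | ⟨him, -⟩
        · constructor <;> rintro ⟨-, h2'⟩ <;> exact absurd h2' (by unfold Before; simp only [List.length_cons, List.length_nil] at *; omega)
        · exact absurd (by simp : i ∈ [a, i]) him
    · have him : i ∉ [a, b] := by
        simp only [List.mem_cons, List.not_mem_nil, or_false]
        tauto
      unfold IsPeak
      exact and_congr
        (before_congr [] u [a, b] [b, a] hmm hnd _ _ (mem _ (by omega) (by omega))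
          (mem _ (by omega) (by omega)) (fun _ hy => absurd hy him))
        (before_congr [] u [a, b] [b, a] hmm hnd _ _ (mem _ (by omega) (by omega))
          (mem _ (by omega) (by omega)) (fun _ hy => absurd hy him))

theorem sagan_worley_moves_preserve_peaks (n : ℕ) :
    -- a peak is precisely a value preceded by both its neighbours (definitional form):
    (∀ w : List ℕ, IsPermWord n w → ∀ i, 2 ≤ i → i + 1 ≤ n →
      (IsPeak w i ↔ (Before w (i - 1) i ∧ Before w (i + 1) i))) ∧
    -- move (1): swapping the first two letters a < b
    (∀ (a b : ℕ) (u : List ℕ), a < b → IsPermWord n (a :: b :: u) →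
      ∀ i, 2 ≤ i → i + 1 ≤ n →
        (IsPeak (a :: b :: u) i ↔ IsPeak (b :: a :: u) i)) ∧
    -- move (2): ⋯ b a c ⋯ ↦ ⋯ b c a ⋯ for a < b < c
    (∀ (a b c : ℕ) (u v : List ℕ), a < b → b < c →
      IsPermWord n (u ++ [b, a, c] ++ v) →
      ∀ i, 2 ≤ i → i + 1 ≤ n →
        (IsPeak (u ++ [b, a, c] ++ v) i ↔ IsPeak (u ++ [b, c, a] ++ v) i)) ∧
    -- move (3): ⋯ c a b ⋯ ↦ ⋯ a c b ⋯ for a < b < c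
    (∀ (a b c : ℕ) (u v : List ℕ), a < b → b < c →
      IsPermWord n (u ++ [c, a, b] ++ v) →
      ∀ i, 2 ≤ i → i + 1 ≤ n →
        (IsPeak (u ++ [c, a, b] ++ v) i ↔ IsPeak (u ++ [a, c, b] ++ v) i)) := by
  refine ⟨fun w _ i _ _ => Iff.rfl, ?_, ?_, ?_⟩
  · intro a b u hab hp i h2 hn
    exact move1 n a b u hab hp i h2 hn
  · intro a b c u v hab hbc hp i h2 hn
    exact move_generic n u v [b, a, c] [b, c, a]
      (List.Perm.cons b (List.Perm.swap c a [])) hp i h2 hn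
      (fun x y hadj hx hy => spec2 a b c x y hab hbc hadj hx hy)
  · intro a b c u v hab hbc hp i h2 hn
    exact move_generic n u v [c, a, b] [a, c, b]
      (List.Perm.swap a c [b]) hp i h2 hn
      (fun x y hadj hx hy => spec3 a b c x y hab hbc hadj hx hy)
end

section
/- For every n ≥ 1, the number of alternating permutations of {1,…,n} beginning with an ascent equals the number of alternating permutations of {1,…,n} in the 'reverse' sense beginning with a descent (a₁ > a₂ < a₃ > ⋯); equivalently, E_n satisfies the recurrence 2·E_{n+1} = ∑_{k=0}^{n} C(n,k)·E_k·E_{n-k} for n ≥ 1, with E₀ = E₁ = 1. -/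
/-!
STATEMENT 15: For every n ≥ 1, the number of alternating permutations of {1,…,n}
(beginning with an ascent) equals the number of reverse alternating permutations of
{1,…,n} (beginning with a descent); equivalently, the Euler zigzag numbers E_n satisfy
2·E_{n+1} = ∑_{k=0}^{n} C(n,k)·E_k·E_{n-k} for n ≥ 1, with E₀ = E₁ = 1.
-/

/-- `w` is an alternating word: w₁ < w₂ > w₃ < w₄ > ⋯ (positions 0-indexed). -/
def IsAlternatingWord (w : List ℕ) : Prop :=
  ∀ k, k + 1 < w.length →
    (Even k → w.getD k 0 < w.getD (k + 1) 0) ∧ (Odd k → w.getD (k + 1) 0 < w.getD k 0)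

/-- `w` is a reverse alternating word: w₁ > w₂ < w₃ > w₄ < ⋯. -/
def IsRevAlternatingWord (w : List ℕ) : Prop :=
  ∀ k, k + 1 < w.length →
    (Even k → w.getD (k + 1) 0 < w.getD k 0) ∧ (Odd k → w.getD k 0 < w.getD (k + 1) 0)

/-- The Euler zigzag number `E n`: the number of alternating permutations of {1,…,n}. -/
noncomputable def eulerE (n : ℕ) : ℕ :=
  Nat.card {w : List ℕ // w.Perm (List.range' 1 n) ∧ IsAlternatingWord w}

/-!
Complementing letters, `x ↦ n + 1 - x`, exchanges alternating and reverse alternating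
permutations of `{1,…,n}`. For the recurrence, cut an alternating or reverse alternating
permutation of `{1,…,n+1}` at its largest letter: `p ++ (n+1) :: v` zigzags iff `p` read
backwards and `v` are alternating. The number of alternating arrangements of a set `s`
depends only on `#s` (replace each letter by its rank in `s`), so choosing the
letter set `s ⊆ {1,…,n}` of `p` contributes `E_{#s} E_{n-#s}`. For `n ≥ 1` no word is both
alternating and reverse alternating, so the left side counts `2 E_{n+1}` words.
-/

open Finset

/-- `Zigzag true` is `IsAlternatingWord` and `Zigzag false` is `IsRevAlternatingWord`; the
phase parameter makes the statements about gluing and reversing words uniform. -/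
def Zigzag_s15 {α : Type*} [LT α] : Bool → List α → Prop
  | up, a :: b :: w => (if up then a < b else b < a) ∧ Zigzag_s15 (!up) (b :: w)
  | _, _ => True

section Zigzag_s15

variable {α : Type*}

section LT

variable [LT α]

@[simp] theorem zigzag_nil (up : Bool) : Zigzag_s15 up ([] : List α) := trivial

@[simp] theorem zigzag_singleton (up : Bool) (a : α) : Zigzag_s15 up [a] := trivial

@[simp] theorem zigzag_cons_cons (up : Bool) (a b : α) (w : List α) :
    Zigzag_s15 up (a :: b :: w) ↔ (if up then a < b else b < a) ∧ Zigzag_s15 (!up) (b :: w) :=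
  Iff.rfl

theorem zigzag_map_of_lt_iff {β : Type*} [LT β] {f : α → β} (up : Bool) {w : List α}
    (hf : ∀ x ∈ w, ∀ y ∈ w, f x < f y ↔ x < y) : Zigzag_s15 up (w.map f) ↔ Zigzag_s15 up w := by
  induction w generalizing up with
  | nil => simp
  | cons a w ih =>
    cases w with
    | nil => simp
    | cons b w =>
      simp only [List.map_cons, zigzag_cons_cons] at ih ⊢
      rw [ih (!up) (fun x hx y hy => hf x (by simp_all) y (by simp_all)),
        hf a (by simp) b (by simp), hf b (by simp) a (by simp)]

theorem zigzag_map_of_lt_iff_gt {β : Type*} [LT β] {f : α → β} (up : Bool) {w : List α}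
    (hf : ∀ x ∈ w, ∀ y ∈ w, f x < f y ↔ y < x) :
    Zigzag_s15 up (w.map f) ↔ Zigzag_s15 (!up) w := by
  induction w generalizing up with
  | nil => simp
  | cons a w ih =>
    cases w with
    | nil => simp
    | cons b w =>
      simp only [List.map_cons, zigzag_cons_cons] at ih ⊢
      rw [ih (!up) (fun x hx y hy => hf x (by simp_all) y (by simp_all)),
        hf a (by simp) b (by simp), hf b (by simp) a (by simp)]
      cases up <;> simp

theorem zigzag_append_cons (up : Bool) (u v : List α) (b : α) :
    Zigzag_s15 up (u ++ b :: v) ↔ Zigzag_s15 up (u ++ [b]) ∧ Zigzag_s15 (up ^^ u.length.bodd) (b :: v) := by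
  induction u generalizing up with
  | nil => simp
  | cons a u ih =>
    cases u with
    | nil => simp
    | cons c u =>
      simp only [List.cons_append, zigzag_cons_cons]
      rw [← List.cons_append (a := c) (as := u), ← List.cons_append (a := c) (as := u), ih,
        List.length_cons, Nat.bodd_succ]
      cases up <;> simp [and_assoc]

theorem zigzag_reverse (up : Bool) (w : List α) :
    Zigzag_s15 up w.reverse ↔ Zigzag_s15 (up ^^ !w.length.bodd) w := by
  induction w generalizing up with
  | nil => simp
  | cons a w ih =>
    cases w with
    | nil => simp
    | cons b w =>
      rw [List.reverse_cons, List.reverse_cons, List.append_assoc, List.singleton_append,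
        zigzag_append_cons, ← List.reverse_cons, ih]
      simp only [zigzag_cons_cons, List.length_cons, Nat.bodd_succ, List.length_reverse]
      cases up <;> cases w.length.bodd <;> simp [and_comm]

end LT

variable [Preorder α]

theorem zigzag_length_le_one {w : List α} (h : Zigzag_s15 true w) (h' : Zigzag_s15 false w) :
    w.length ≤ 1 := by
  match w, h, h' with
  | [], _, _ | [_], _, _ => simp
  | a :: b :: w, h, h' => exact absurd h.1 (by simpa using h'.1.asymm)

variable {m : α}

theorem zigzag_false_cons_of_forall_lt {v : List α} (hv : ∀ x ∈ v, x < m) :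
    Zigzag_s15 false (m :: v) ↔ Zigzag_s15 true v := by
  cases v with
  | nil => simp
  | cons a v => simp [hv a (by simp)]

theorem zigzag_true_cons_of_forall_lt {v : List α} (hv : ∀ x ∈ v, x < m) :
    Zigzag_s15 true (m :: v) ↔ v = [] := by
  cases v with
  | nil => simp
  | cons a v => simp [(hv a (by simp)).asymm]

theorem exists_zigzag_append_cons_iff {p v : List α} (hp : ∀ x ∈ p, x < m)
    (hv : ∀ x ∈ v, x < m) :
    (∃ up, Zigzag_s15 up (p ++ m :: v)) ↔ Zigzag_s15 true p.reverse ∧ Zigzag_s15 true v := by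
  have hp' : ∀ x ∈ p.reverse, x < m := by simpa using hp
  -- read `p ++ [m]` backwards, so that both pieces start at the peak `m`
  have split (up : Bool) : Zigzag_s15 up (p ++ m :: v) ↔
      Zigzag_s15 (up ^^ p.length.bodd) (m :: p.reverse) ∧ Zigzag_s15 (up ^^ p.length.bodd) (m :: v) := by
    rw [zigzag_append_cons, ← List.reverse_reverse (p ++ [m]), zigzag_reverse]
    simp
  have shift : (∃ up, Zigzag_s15 up (p ++ m :: v)) ↔
      ∃ up, Zigzag_s15 up (m :: p.reverse) ∧ Zigzag_s15 up (m :: v) :=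
    ⟨fun ⟨up, h⟩ => ⟨_, (split up).1 h⟩,
      fun ⟨up, h⟩ => ⟨up ^^ p.length.bodd, (split _).2 (by simpa using h)⟩⟩
  rw [shift, Bool.exists_bool, zigzag_false_cons_of_forall_lt hp',
    zigzag_false_cons_of_forall_lt hv, zigzag_true_cons_of_forall_lt hp',
    zigzag_true_cons_of_forall_lt hv]
  exact or_iff_left_of_imp fun h => by simp [h.1, h.2]

end Zigzag_s15

theorem isAlternatingWord_cons_cons {a b : ℕ} {w : List ℕ} :
    IsAlternatingWord (a :: b :: w) ↔ a < b ∧ IsRevAlternatingWord (b :: w) := by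
  constructor
  · intro h
    refine ⟨(h 0 (by simp)).1 Even.zero, fun k hk => ?_⟩
    have := h (k + 1) (by simp at hk ⊢; omega)
    simpa [Nat.even_add_one, Nat.odd_add_one, Nat.not_even_iff_odd, and_comm] using this
  · rintro ⟨hab, h⟩ (_ | k) hk
    · simpa using hab
    · have := h k (by simpa using hk)
      simpa [Nat.even_add_one, Nat.odd_add_one, Nat.not_even_iff_odd, and_comm] using this

theorem isRevAlternatingWord_cons_cons {a b : ℕ} {w : List ℕ} :
    IsRevAlternatingWord (a :: b :: w) ↔ b < a ∧ IsAlternatingWord (b :: w) := by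
  constructor
  · intro h
    refine ⟨(h 0 (by simp)).1 Even.zero, fun k hk => ?_⟩
    have := h (k + 1) (by simp at hk ⊢; omega)
    simpa [Nat.even_add_one, Nat.odd_add_one, Nat.not_even_iff_odd, and_comm] using this
  · rintro ⟨hab, h⟩ (_ | k) hk
    · simpa using hab
    · have := h k (by simpa using hk)
      simpa [Nat.even_add_one, Nat.odd_add_one, Nat.not_even_iff_odd, and_comm] using this

theorem zigzag_true_iff_and_zigzag_false_iff (w : List ℕ) :
    (Zigzag_s15 true w ↔ IsAlternatingWord w) ∧ (Zigzag_s15 false w ↔ IsRevAlternatingWord w) := by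
  induction w with
  | nil => simp [IsAlternatingWord, IsRevAlternatingWord]
  | cons a w ih =>
    cases w with
    | nil => simp [IsAlternatingWord, IsRevAlternatingWord]
    | cons b w => simp [isAlternatingWord_cons_cons, isRevAlternatingWord_cons_cons, ih.1, ih.2]

theorem mem_of_coe_eq_val {α : Type*} {s : Finset α} {w : List α}
    (h : (w : Multiset α) = s.val) {x : α} (hx : x ∈ w) : x ∈ s := by
  rw [← mem_val, ← h]
  exact hx

theorem Multiset.add_eq_val_iff {α : Type*} [DecidableEq α] {a b : Multiset α}
    {t : Finset α} : a + b = t.val ↔ ∃ s ⊆ t, a = s.val ∧ b = (t \ s).val := by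
  constructor
  · intro h
    have hle : a ≤ t.val := h ▸ Multiset.le_add_right a b
    refine ⟨⟨a, Multiset.nodup_of_le hle t.nodup⟩, Finset.val_le_iff.1 hle, rfl, ?_⟩
    change b = t.val - a
    rw [← h, add_tsub_cancel_left]
  · rintro ⟨s, hs, rfl, rfl⟩
    rw [sdiff_val, add_tsub_cancel_of_le (val_le_iff.2 hs)]

theorem coe_append_cons_eq_insert_val_iff {t : Finset ℕ} {m : ℕ} (hm : m ∉ t)
    {p v : List ℕ} :
    ((p ++ m :: v : List ℕ) : Multiset ℕ) = (insert m t).val ↔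
      ∃ s ⊆ t, (p : Multiset ℕ) = s.val ∧ (v : Multiset ℕ) = (t \ s).val := by
  rw [insert_val_of_notMem hm, ← Multiset.coe_add, ← Multiset.cons_coe, Multiset.add_cons,
    Multiset.cons_inj_right, Multiset.add_eq_val_iff]

open Classical in
noncomputable def zigzagWords (up : Bool) (s : Finset ℕ) : Finset (List ℕ) :=
  s.val.lists.toFinset.filter (Zigzag_s15 up)

theorem mem_zigzagWords {up : Bool} {s : Finset ℕ} {w : List ℕ} :
    w ∈ zigzagWords up s ↔ (w : Multiset ℕ) = s.val ∧ Zigzag_s15 up w := by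
  simp [zigzagWords, eq_comm]

theorem mem_of_mem_zigzagWords {up : Bool} {s : Finset ℕ} {w : List ℕ}
    (hw : w ∈ zigzagWords up s) : ∀ x ∈ w, x ∈ s :=
  fun _ hx => mem_of_coe_eq_val (mem_zigzagWords.1 hw).1 hx

theorem card_zigzagWords_image {f : ℕ → ℕ} {s : Finset ℕ} (hf : Set.InjOn f s)
    {up up' : Bool}
    (hzig : ∀ w : List ℕ, (∀ x ∈ w, x ∈ s) → (Zigzag_s15 up' (w.map f) ↔ Zigzag_s15 up w)) :
    #(zigzagWords up' (s.image f)) = #(zigzagWords up s) := by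
  set g := Function.invFunOn f s
  have hgf : Set.LeftInvOn g f s := hf.leftInvOn_invFunOn
  have hfg : ∀ w ∈ zigzagWords up' (s.image f), (w.map g).map f = w := by
    intro w hw
    rw [List.map_map]
    refine List.map_congr_left (fun y hy => ?_) |>.trans w.map_id
    exact Function.invFunOn_eq (Finset.mem_image.1 (mem_of_mem_zigzagWords hw y hy))
  refine (card_nbij' (·.map f) (·.map g) (fun w hw => ?_) (fun w hw => ?_)
    (fun w hw => ?_) (fun w hw => hfg w hw)).symm
  · have hws := mem_of_mem_zigzagWords hw
    rw [Finset.mem_coe, mem_zigzagWords] at hw ⊢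
    refine ⟨?_, (hzig w hws).2 hw.2⟩
    rw [image_val_of_injOn hf, ← hw.1, Multiset.map_coe]
  · have hgs : ∀ x ∈ w.map g, x ∈ s := by
      simp only [List.mem_map]
      rintro _ ⟨y, hy, rfl⟩
      exact Function.invFunOn_mem (Finset.mem_image.1 (mem_of_mem_zigzagWords hw y hy))
    have hzw := (hzig _ hgs).1 (by rw [hfg w hw]; exact (mem_zigzagWords.1 hw).2)
    rw [Finset.mem_coe, mem_zigzagWords] at hw ⊢
    refine ⟨?_, hzw⟩
    rw [← Multiset.map_coe, hw.1, image_val_of_injOn hf, Multiset.map_map]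
    exact (Multiset.map_congr rfl fun x hx => hgf hx).trans s.val.map_id
  · change (w.map f).map g = w
    rw [List.map_map]
    exact (List.map_congr_left fun x hx => hgf (mem_of_mem_zigzagWords hw x hx)).trans w.map_id

theorem card_zigzagWords_image_of_strictMonoOn {f : ℕ → ℕ} {s : Finset ℕ}
    (hf : StrictMonoOn f s) (up : Bool) : #(zigzagWords up (s.image f)) = #(zigzagWords up s) :=
  card_zigzagWords_image hf.injOn fun _ hw =>
    zigzag_map_of_lt_iff up fun _ hx _ hy => hf.lt_iff_lt (hw _ hx) (hw _ hy)

theorem card_zigzagWords_image_of_strictAntiOn {f : ℕ → ℕ} {s : Finset ℕ}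
    (hf : StrictAntiOn f s) (up : Bool) :
    #(zigzagWords up (s.image f)) = #(zigzagWords (!up) s) :=
  card_zigzagWords_image hf.injOn fun _ hw =>
    zigzag_map_of_lt_iff_gt up fun _ hx _ hy => hf.lt_iff_gt (hw _ hx) (hw _ hy)

theorem exists_strictMonoOn_image_eq_Icc (s : Finset ℕ) :
    ∃ f : ℕ → ℕ, StrictMonoOn f s ∧ s.image f = Icc 1 #s := by
  set rank := fun x => #(s.filter (· ≤ x))
  have hrank : StrictMonoOn rank s := by
    intro x hx y hy hxy
    refine card_lt_card ⟨fun a ha => ?_, fun h => ?_⟩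
    · rw [mem_filter] at ha ⊢
      exact ⟨ha.1, ha.2.trans hxy.le⟩
    · exact (mem_filter.1 (h (mem_filter.2 ⟨hy, le_rfl⟩))).2.not_gt hxy
  refine ⟨rank, hrank, eq_of_subset_of_card_le (fun y hy => ?_) ?_⟩
  · obtain ⟨x, hx, rfl⟩ := mem_image.1 hy
    exact mem_Icc.2 ⟨card_pos.2 ⟨x, mem_filter.2 ⟨hx, le_rfl⟩⟩, card_filter_le _ _⟩
  · rw [Nat.card_Icc, card_image_of_injOn hrank.injOn, Nat.add_sub_cancel]

theorem card_zigzagWords_true_Icc_eq_false (n : ℕ) :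
    #(zigzagWords true (Icc 1 n)) = #(zigzagWords false (Icc 1 n)) := by
  have hf : StrictAntiOn (fun x => n + 1 - x) (Icc 1 n : Set ℕ) := by
    intro x hx y hy hxy
    simp only [coe_Icc, Set.mem_Icc] at hx hy
    dsimp only
    omega
  have himage : (Icc 1 n).image (fun x => n + 1 - x) = Icc 1 n := by
    refine eq_of_subset_of_card_le (fun y hy => ?_) (card_image_of_injOn hf.injOn).ge
    obtain ⟨x, hx, rfl⟩ := mem_image.1 hy
    rw [mem_Icc] at hx ⊢
    omega
  simpa [himage] using card_zigzagWords_image_of_strictAntiOn hf true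

theorem natCard_perm_range'_zigzag (up : Bool) (n : ℕ) :
    Nat.card {w : List ℕ // w.Perm (List.range' 1 n) ∧ Zigzag_s15 up w} =
      #(zigzagWords up (Icc 1 n)) := by
  rw [← Nat.card_eq_finsetCard]
  refine Nat.card_congr (Equiv.subtypeEquivRight fun w => ?_)
  rw [mem_zigzagWords, Nat.Icc_eq_range']
  simp

theorem eulerE_eq_card_zigzagWords (n : ℕ) : eulerE n = #(zigzagWords true (Icc 1 n)) := by
  simp only [eulerE, ← (zigzag_true_iff_and_zigzag_false_iff _).1, natCard_perm_range'_zigzag]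

theorem natCard_perm_range'_isRevAlternatingWord (n : ℕ) :
    Nat.card {w : List ℕ // w.Perm (List.range' 1 n) ∧ IsRevAlternatingWord w} =
      #(zigzagWords false (Icc 1 n)) := by
  simp only [← (zigzag_true_iff_and_zigzag_false_iff _).2, natCard_perm_range'_zigzag]

theorem eulerE_zero : eulerE 0 = 1 := by
  simp [eulerE_eq_card_zigzagWords, zigzagWords, ← Multiset.coe_nil, filter_singleton]

theorem eulerE_one : eulerE 1 = 1 := by
  simp [eulerE_eq_card_zigzagWords, zigzagWords, ← Multiset.coe_singleton, List.permutations,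
    filter_singleton]

theorem card_zigzagWords_true (s : Finset ℕ) : #(zigzagWords true s) = eulerE #s := by
  obtain ⟨f, hf, himage⟩ := exists_strictMonoOn_image_eq_Icc s
  rw [eulerE_eq_card_zigzagWords, ← himage, card_zigzagWords_image_of_strictMonoOn hf]

theorem disjoint_zigzagWords {s : Finset ℕ} (hs : 2 ≤ #s) :
    Disjoint (zigzagWords true s) (zigzagWords false s) := by
  refine disjoint_left.2 fun w hw hw' => ?_
  have hlen : w.length = #s := by
    rw [← Multiset.coe_card, (mem_zigzagWords.1 hw).1, card_val]
  have := zigzag_length_le_one (mem_zigzagWords.1 hw).2 (mem_zigzagWords.1 hw').2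
  omega

theorem card_zigzagWords_union_insert {t : Finset ℕ} {m : ℕ} (ht : ∀ x ∈ t, x < m) :
    #(zigzagWords true (insert m t) ∪ zigzagWords false (insert m t)) =
      ∑ s ∈ t.powerset, #(zigzagWords true s) * #(zigzagWords true (t \ s)) := by
  have hm : m ∉ t := fun h => (ht m h).false
  have mem_union_iff (w : List ℕ) :
      w ∈ zigzagWords true (insert m t) ∪ zigzagWords false (insert m t) ↔
        (w : Multiset ℕ) = (insert m t).val ∧ ∃ up, Zigzag_s15 up w := by
    simp only [mem_union, mem_zigzagWords, Bool.exists_bool]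
    tauto
  simp_rw [← card_product, ← card_sigma]
  symm
  refine card_bij (fun x _ => x.2.1.reverse ++ m :: x.2.2) ?_ ?_ ?_
  · rintro ⟨s, u, v⟩ hx
    rw [mem_sigma, mem_product, mem_powerset] at hx
    obtain ⟨hs, hu, hv⟩ := hx
    have hlt : ∀ x ∈ u.reverse, x < m := fun x hx =>
      ht x (hs (mem_of_mem_zigzagWords hu x (List.mem_reverse.1 hx)))
    have hlt' : ∀ x ∈ v, x < m := fun x hx =>
      ht x (mem_sdiff.1 (mem_of_mem_zigzagWords hv x hx)).1
    rw [mem_zigzagWords] at hu hv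
    rw [mem_union_iff, coe_append_cons_eq_insert_val_iff hm,
      exists_zigzag_append_cons_iff hlt hlt', List.reverse_reverse, Multiset.coe_reverse]
    exact ⟨⟨s, hs, hu.1, hv.1⟩, hu.2, hv.2⟩
  · rintro ⟨s, u, v⟩ hx ⟨s', u', v'⟩ hx' h
    rw [mem_sigma, mem_product, mem_powerset] at hx hx'
    have hmu : m ∉ u.reverse := fun hmu =>
      hm (hx.1 (mem_of_mem_zigzagWords hx.2.1 m (List.mem_reverse.1 hmu)))
    have hmv : m ∉ v := fun hmv => hm (mem_sdiff.1 (mem_of_mem_zigzagWords hx.2.2 m hmv)).1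
    obtain ⟨hu, -, rfl⟩ := (List.append_cons_inj_of_notMem hmu hmv).1 h
    rw [List.reverse_inj] at hu
    subst hu
    obtain rfl : s = s' := by
      rw [← val_inj, ← (mem_zigzagWords.1 hx.2.1).1, ← (mem_zigzagWords.1 hx'.2.1).1]
    rfl
  · intro w hw
    obtain ⟨hw, up, hz⟩ := (mem_union_iff w).1 hw
    have hmw : m ∈ w := by
      rw [← Multiset.mem_coe, hw, mem_val]
      exact mem_insert_self m t
    obtain ⟨p, v, rfl⟩ := List.append_of_mem hmw
    obtain ⟨s, hs, hp, hv⟩ := (coe_append_cons_eq_insert_val_iff hm).1 hw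
    have hpm : ∀ x ∈ p, x < m := fun x hx => ht x (hs (mem_of_coe_eq_val hp hx))
    have hvm : ∀ x ∈ v, x < m := fun x hx => ht x (mem_sdiff.1 (mem_of_coe_eq_val hv hx)).1
    obtain ⟨hzp, hzv⟩ := (exists_zigzag_append_cons_iff hpm hvm).1 ⟨up, hz⟩
    refine ⟨⟨s, p.reverse, v⟩, ?_, by simp⟩
    simp only [mem_sigma, mem_product, mem_powerset, mem_zigzagWords, Multiset.coe_reverse]
    exact ⟨hs, ⟨hp, hzp⟩, hv, hzv⟩

theorem alternating_reverse_and_recurrence :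
    eulerE 0 = 1 ∧ eulerE 1 = 1 ∧
    ∀ n, 1 ≤ n →
      (eulerE n =
        Nat.card {w : List ℕ // w.Perm (List.range' 1 n) ∧ IsRevAlternatingWord w}) ∧
      2 * eulerE (n + 1) =
        ∑ k ∈ Finset.range (n + 1), Nat.choose n k * eulerE k * eulerE (n - k) := by
  refine ⟨eulerE_zero, eulerE_one, fun n hn => ⟨?_, ?_⟩⟩
  · rw [eulerE_eq_card_zigzagWords, natCard_perm_range'_isRevAlternatingWord,
      card_zigzagWords_true_Icc_eq_false]
  calc 2 * eulerE (n + 1)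
      = #(zigzagWords true (Icc 1 (n + 1))) + #(zigzagWords false (Icc 1 (n + 1))) := by
        rw [eulerE_eq_card_zigzagWords, card_zigzagWords_true_Icc_eq_false, two_mul]
    _ = #(zigzagWords true (Icc 1 (n + 1)) ∪ zigzagWords false (Icc 1 (n + 1))) :=
        (card_union_of_disjoint (disjoint_zigzagWords (by simp; omega))).symm
    _ = ∑ s ∈ (Icc 1 n).powerset, eulerE #s * eulerE (n - #s) := by
        rw [← insert_Icc_right_eq_Icc_add_one (by omega),
          card_zigzagWords_union_insert fun x hx => Nat.lt_add_one_iff.2 (mem_Icc.1 hx).2]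
        refine sum_congr rfl fun s hs => ?_
        rw [card_zigzagWords_true, card_zigzagWords_true,
          card_sdiff_of_subset (mem_powerset.1 hs), Nat.card_Icc, Nat.add_sub_cancel]
    _ = ∑ k ∈ range (n + 1), n.choose k * eulerE k * eulerE (n - k) := by
        rw [sum_powerset_apply_card (fun k => eulerE k * eulerE (n - k)), Nat.card_Icc,
          Nat.add_sub_cancel]
        simp only [smul_eq_mul, mul_assoc]
end

section
/- If a standard Young tableau T of size m is alternating (every odd i < m is an ascent and every even i < m is a descent), then performing a single jeu de taquin slide on T (viewed as a skew shifted tableau) yields a tableau that is still alternating. -/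
/-!
STATEMENT 17: If a standard Young tableau T of size m (viewed as a skew shifted standard
tableau, i.e. a translate of a straight Young diagram placed in the shifted plane) is
alternating, then performing a single jeu de taquin slide on T yields a tableau that is
still alternating.

A tableau is given by its cell set `C : Finset (ℕ × ℕ)` together with an entry function.
A slide into an empty inner corner `c` (a cell whose addition to `C` again gives a skew
shifted diagram) repeatedly moves into the empty cell the smaller of the entries to its
right and below, until the empty cell becomes an outer corner.
-/

/-- `C` is the cell set of a skew shifted diagram λ/μ for strict partitions μ ⊆ λ:
row `i` occupies the columns `i + μᵢ ≤ j < i + λᵢ`. -/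
def IsSkewShiftedDiagram (C : Finset (ℕ × ℕ)) : Prop :=
  ∃ lam mu : ℕ → ℕ,
    (∀ i, mu i ≤ lam i) ∧
    (∀ i, lam (i + 1) < lam i ∨ lam (i + 1) = 0) ∧
    (∀ i, mu (i + 1) < mu i ∨ mu (i + 1) = 0) ∧
    ∀ p : ℕ × ℕ, p ∈ C ↔ (p.1 + mu p.1 ≤ p.2 ∧ p.2 < p.1 + lam p.1)

/-- `entry` is a standard filling of `C` of size `m`: a bijection onto {1,…,m},
strictly increasing along rows and columns. -/
def IsStandard (C : Finset (ℕ × ℕ)) (entry : ℕ × ℕ → ℕ) (m : ℕ) : Prop :=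
  C.card = m ∧
  Set.BijOn entry C (Set.Icc 1 m) ∧
  (∀ c ∉ C, entry c = 0) ∧
  (∀ i j, (i, j) ∈ C → (i, j + 1) ∈ C → entry (i, j) < entry (i, j + 1)) ∧
  (∀ i j, (i, j) ∈ C → (i + 1, j) ∈ C → entry (i, j) < entry (i + 1, j))

/-- `i` is an ascent: `i + 1` lies weakly north and strictly east of `i`. -/
def AscentAt (C : Finset (ℕ × ℕ)) (entry : ℕ × ℕ → ℕ) (i : ℕ) : Prop :=
  ∃ c ∈ C, ∃ d ∈ C, entry c = i ∧ entry d = i + 1 ∧ d.1 ≤ c.1 ∧ c.2 < d.2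

/-- `i` is a descent: `i + 1` lies strictly south and weakly west of `i`. -/
def DescentAt (C : Finset (ℕ × ℕ)) (entry : ℕ × ℕ → ℕ) (i : ℕ) : Prop :=
  ∃ c ∈ C, ∃ d ∈ C, entry c = i ∧ entry d = i + 1 ∧ c.1 < d.1 ∧ d.2 ≤ c.2

/-- The filling is alternating: every odd `i < m` is an ascent, every even one a descent. -/
def AlternatingFilling (C : Finset (ℕ × ℕ)) (entry : ℕ × ℕ → ℕ) (m : ℕ) : Prop :=
  ∀ i, 1 ≤ i → i < m →
    (Odd i → AscentAt C entry i) ∧ (Even i → DescentAt C entry i)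

/-- A single jeu de taquin slide of the tableau `(C, entry)` into the inner corner `c`,
producing the tableau `(C', entry')`.  The slide follows a path `path 0 = c, …, path k`,
each step moving into the empty cell the smaller of the entries immediately to its right
and below; it stops when the empty cell has no neighbours to its right or below in `C`. -/
def Slide (C : Finset (ℕ × ℕ)) (entry : ℕ × ℕ → ℕ) (c : ℕ × ℕ)
    (C' : Finset (ℕ × ℕ)) (entry' : ℕ × ℕ → ℕ) : Prop :=
  c ∉ C ∧ IsSkewShiftedDiagram (insert c C) ∧
  ∃ (k : ℕ) (path : ℕ → ℕ × ℕ),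
    path 0 = c ∧
    (∀ i < k,
      ((path (i + 1) = ((path i).1, (path i).2 + 1) ∧ path (i + 1) ∈ C ∧
          (((path i).1 + 1, (path i).2) ∈ C →
            entry (path (i + 1)) < entry ((path i).1 + 1, (path i).2))) ∨
       (path (i + 1) = ((path i).1 + 1, (path i).2) ∧ path (i + 1) ∈ C ∧
          (((path i).1, (path i).2 + 1) ∈ C →
            entry (path (i + 1)) < entry ((path i).1, (path i).2 + 1))))) ∧
    ((path k).1, (path k).2 + 1) ∉ C ∧ ((path k).1 + 1, (path k).2) ∉ C ∧
    C' = (insert c C).erase (path k) ∧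
    (∀ i < k, entry' (path i) = entry (path (i + 1))) ∧
    (∀ d : ℕ × ℕ, (∀ i ≤ k, d ≠ path i) → entry' d = entry d) ∧
    (∀ d ∉ C', entry' d = 0)

section Aux

lemma getD_antitone (l : List ℕ) (h : l.Chain' (· ≥ ·)) :
    ∀ i j : ℕ, i ≤ j → l.getD j 0 ≤ l.getD i 0 := by
  have step : ∀ n : ℕ, l.getD (n+1) 0 ≤ l.getD n 0 := by
    intro n
    by_cases hn : n + 1 < l.length
    · have hn' : n < l.length := by omega
      rw [List.getD_eq_getElem l 0 hn, List.getD_eq_getElem l 0 hn']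
      exact List.isChain_iff_getElem.mp h n (by omega)
    · rw [List.getD_eq_default l 0 (by omega)]
      exact Nat.zero_le _
  intro i j hij
  induction j with
  | zero => interval_cases i; rfl
  | succ n ih =>
    rcases Nat.lt_or_ge i (n+1) with hlt | hge
    · exact le_trans (step n) (ih (by omega))
    · have : i = n + 1 := by omega
      subst this; rfl

lemma shape_no_hook {D : Finset (ℕ × ℕ)} (hD : IsSkewShiftedDiagram D) {a x : ℕ}
    (h1 : (a, x) ∈ D) (h2 : (a, x+1) ∉ D) (h3 : (a+1, x+1) ∈ D) : False := by
  obtain ⟨lam, mu, hml, hlam, hmu, hmem⟩ := hD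
  have H1 := (hmem (a, x)).1 h1
  have H3 := (hmem (a+1, x+1)).1 h3
  simp only at H1 H3
  have H2 : ¬ (a + mu a ≤ x+1 ∧ x+1 < a + lam a) := fun h => h2 ((hmem (a, x+1)).2 h)
  have hm := hml a
  rcases hlam a with h | h <;> omega

variable {C : Finset (ℕ × ℕ)} {entry : ℕ × ℕ → ℕ} {r0 c0 : ℕ} {lam : List ℕ}
variable (hmem : ∀ p : ℕ × ℕ, p ∈ C ↔ ∃ i j, i < lam.length ∧ j < lam.getD i 0 ∧ p = (r0 + i, c0 + j))

include hmem

lemma straight_ge {p : ℕ × ℕ} (hp : p ∈ C) : r0 ≤ p.1 ∧ c0 ≤ p.2 := by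
  obtain ⟨i, j, _, _, rfl⟩ := (hmem p).1 hp
  exact ⟨Nat.le_add_right _ _, Nat.le_add_right _ _⟩

lemma straight_row_prefix {a x y : ℕ} (hp : (a, x) ∈ C) (h1 : c0 ≤ y) (h2 : y ≤ x) :
    (a, y) ∈ C := by
  obtain ⟨i, j, hi, hj, heq⟩ := (hmem (a, x)).1 hp
  rw [Prod.mk.injEq] at heq
  exact (hmem (a, y)).2 ⟨i, y - c0, hi, by omega, by rw [Prod.mk.injEq]; omega⟩

lemma straight_col_prefix (hchain : lam.Chain' (· ≥ ·)) {a x t : ℕ} (hp : (a, x) ∈ C)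
    (h1 : r0 ≤ t) (h2 : t ≤ a) : (t, x) ∈ C := by
  obtain ⟨i, j, hi, hj, heq⟩ := (hmem (a, x)).1 hp
  rw [Prod.mk.injEq] at heq
  refine (hmem (t, x)).2 ⟨t - r0, j, by omega, ?_, by rw [Prod.mk.injEq]; omega⟩
  exact lt_of_lt_of_le hj (getD_antitone lam hchain _ i (by omega))

lemma straight_left_edge {a y : ℕ} (hp : (a, y+1) ∈ C) (hq : (a, y) ∉ C) : y + 1 = c0 := by
  have h1 := (straight_ge hmem hp).2
  rcases Nat.lt_or_ge y c0 with h | h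
  · omega
  · exact absurd (straight_row_prefix hmem hp h (by omega)) hq

lemma entry_row_mono (hrow : ∀ i j, (i, j) ∈ C → (i, j + 1) ∈ C → entry (i, j) < entry (i, j + 1))
    {a x y : ℕ} (hx : (a, x) ∈ C) (hy : (a, y) ∈ C) (hxy : x < y) :
    entry (a, x) < entry (a, y) := by
  induction y with
  | zero => omega
  | succ n ih =>
    rcases Nat.lt_or_ge x n with h | h
    · have hn : (a, n) ∈ C := straight_row_prefix hmem hy (le_trans (straight_ge hmem hx).2 (by omega)) (by omega)
      exact lt_trans (ih hn h) (hrow a n hn hy)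
    · have : x = n := by omega
      subst this
      exact hrow a x hx hy

lemma entry_col_mono (hchain : lam.Chain' (· ≥ ·))
    (hcol : ∀ i j, (i, j) ∈ C → (i + 1, j) ∈ C → entry (i, j) < entry (i + 1, j))
    {a b x : ℕ} (hx : (a, x) ∈ C) (hy : (b, x) ∈ C) (hab : a < b) :
    entry (a, x) < entry (b, x) := by
  induction b with
  | zero => omega
  | succ n ih =>
    rcases Nat.lt_or_ge a n with h | h
    · have hn : (n, x) ∈ C := straight_col_prefix hmem hchain hy (le_trans (straight_ge hmem hx).1 (by omega)) (by omega)
      exact lt_trans (ih hn h) (hcol n x hn hy)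
    · have : a = n := by omega
      subst this
      exact hcol a x hx hy

end Aux

theorem jdt_slide_preserves_alternating
    (m : ℕ) (C : Finset (ℕ × ℕ)) (entry : ℕ × ℕ → ℕ)
    -- T is a (translate of a) straight-shape standard Young tableau …
    (hstraight : ∃ (r0 c0 : ℕ) (lam : List ℕ), lam.Chain' (· ≥ ·) ∧ (∀ x ∈ lam, 0 < x) ∧
      ∀ p : ℕ × ℕ, p ∈ C ↔ ∃ i j, i < lam.length ∧ j < lam.getD i 0 ∧ p = (r0 + i, c0 + j))
    -- … viewed as a skew shifted tableau:
    (hshape : IsSkewShiftedDiagram C)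
    (hstd : IsStandard C entry m)
    (halt : AlternatingFilling C entry m)
    (c : ℕ × ℕ) (C' : Finset (ℕ × ℕ)) (entry' : ℕ × ℕ → ℕ)
    (hslide : Slide C entry c C' entry') :
    AlternatingFilling C' entry' m := by
  obtain ⟨r0, c0, lam, hchain, hpos, hmem⟩ := hstraight
  obtain ⟨hcard, hbij, hzero, hrow, hcol⟩ := hstd
  obtain ⟨hcC, hD, k, path, h0, hstep, hstop1, hstop2, hC'eq, hent1, hent2, hent3⟩ := hslide
  -- basic facts
  have hinjC : ∀ {x y : ℕ × ℕ}, x ∈ C → y ∈ C → entry x = entry y → x = y := by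
    intro x y hx hy h
    exact hbij.2.1 (Finset.mem_coe.mpr hx) (Finset.mem_coe.mpr hy) h
  have hsurjC : ∀ v, 1 ≤ v → v ≤ m → ∃ e, e ∈ C ∧ entry e = v := by
    intro v h1 h2
    obtain ⟨e, he, hev⟩ := hbij.2.2 (Set.mem_Icc.mpr ⟨h1, h2⟩)
    exact ⟨e, Finset.mem_coe.mp he, hev⟩
  -- path facts
  have hpmem : ∀ j < k, path (j+1) ∈ C := by
    intro j hj
    rcases hstep j hj with ⟨_, h, _⟩ | ⟨_, h, _⟩ <;> exact h
  have hpD : ∀ j ≤ k, path j ∈ insert c C := by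
    intro j hj
    cases j with
    | zero => rw [h0]; exact Finset.mem_insert_self _ _
    | succ n => exact Finset.mem_insert_of_mem (hpmem n (by omega))
  have hsum : ∀ j ≤ k, (path j).1 + (path j).2 = c.1 + c.2 + j := by
    intro j hj
    induction j with
    | zero => rw [h0]; omega
    | succ n ih =>
      have hn := ih (by omega)
      rcases hstep n (by omega) with ⟨h, _, _⟩ | ⟨h, _, _⟩ <;> rw [h] <;> dsimp only <;> omega
  have hcoord : ∀ j ≤ k, c.1 ≤ (path j).1 ∧ c.2 ≤ (path j).2 := by
    intro j hj
    induction j with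
    | zero => rw [h0]; exact ⟨le_refl _, le_refl _⟩
    | succ n ih =>
      have hn := ih (by omega)
      rcases hstep n (by omega) with ⟨h, _, _⟩ | ⟨h, _, _⟩ <;> rw [h] <;> dsimp only <;> omega
  have hpinj : ∀ j ≤ k, ∀ l ≤ k, path j = path l → j = l := by
    intro j hj l hl h
    have h1 := hsum j hj
    have h2 := hsum l hl
    rw [← h] at h2
    omega
  have hpe_succ : ∀ j, 1 ≤ j → j < k → entry (path j) < entry (path (j+1)) := by
    intro j h1 hj
    obtain ⟨n, rfl⟩ : ∃ n, j = n + 1 := ⟨j - 1, by omega⟩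
    have hjC : path (n+1) ∈ C := hpmem n (by omega)
    rcases hstep (n+1) hj with ⟨h, hmem2, _⟩ | ⟨h, hmem2, _⟩
    · rw [h]
      exact hrow (path (n+1)).1 (path (n+1)).2 hjC (by rw [← h]; exact hmem2)
    · rw [h]
      exact hcol (path (n+1)).1 (path (n+1)).2 hjC (by rw [← h]; exact hmem2)
  have hpe_mono : ∀ j l, 1 ≤ j → j ≤ l → l ≤ k → entry (path j) ≤ entry (path l) := by
    intro j l h1 hjl hl
    induction l with
    | zero => omega
    | succ n ih =>
      rcases Nat.lt_or_ge j (n+1) with h | h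
      · exact le_trans (ih (by omega) (by omega)) (le_of_lt (hpe_succ n (by omega) (by omega)))
      · have : j = n + 1 := by omega
        subst this; rfl
  -- new position helpers
  have hnew_unmoved : ∀ e ∈ C, (∀ j, 1 ≤ j → j ≤ k → e ≠ path j) →
      e ∈ C' ∧ entry' e = entry e := by
    intro e he hun
    have hne0 : e ≠ path 0 := by rw [h0]; rintro rfl; exact hcC he
    constructor
    · rw [hC'eq]
      refine Finset.mem_erase.mpr ⟨?_, Finset.mem_insert_of_mem he⟩
      cases k with
      | zero => exact hne0
      | succ n => exact hun (n+1) (by omega) (le_refl _)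
    · refine hent2 e ?_
      intro j hj
      cases j with
      | zero => exact hne0
      | succ n => exact hun (n+1) (by omega) hj
  have hnew_moved : ∀ j < k, path j ∈ C' ∧ entry' (path j) = entry (path (j+1)) := by
    intro j hj
    refine ⟨?_, hent1 j hj⟩
    rw [hC'eq]
    refine Finset.mem_erase.mpr ⟨?_, hpD j (by omega)⟩
    intro h
    have := hpinj j (by omega) k (le_refl _) h
    omega
  -- localization of a moved partner
  have hnext : ∀ j < k, ∀ f ∈ C, entry f = entry (path (j+1)) + 1 →
      (∃ l < k, f = path (l+1)) → j + 1 < k ∧ f = path (j+2) := by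
    intro j hj f hf hef ⟨l, hl, hfl⟩
    have h1 : j + 1 < l + 1 := by
      by_contra h
      have := hpe_mono (l+1) (j+1) (by omega) (by omega) (by omega)
      rw [← hfl] at this
      omega
    have hk2 : j + 1 < k := by omega
    have h2 : entry (path (j+1)) < entry (path (j+2)) := hpe_succ (j+1) (by omega) hk2
    have h3 : entry (path (j+2)) ≤ entry (path (l+1)) := hpe_mono (j+2) (l+1) (by omega) (by omega) (by omega)
    rw [← hfl] at h3
    have : entry (path (j+2)) = entry f := by omega
    exact ⟨hk2, (hinjC hf (hpmem (j+1) hk2) this.symm)⟩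
  -- main argument
  intro i hi1 him
  obtain ⟨e, heC, hei⟩ := hsurjC i hi1 (by omega)
  obtain ⟨f, hfC, hfi⟩ := hsurjC (i+1) (by omega) (by omega)
  have hEF : ∀ (P : ℕ × ℕ) (hP : P ∈ C) (hPe : entry P = i), P = e := by
    intro P hP hPe; exact hinjC hP heC (by rw [hPe, hei])
  have hEF1 : ∀ (P : ℕ × ℕ) (hP : P ∈ C) (hPe : entry P = i + 1), P = f := by
    intro P hP hPe; exact hinjC hP hfC (by rw [hPe, hfi])
  constructor
  · -- Odd: Ascent
    intro hodd
    obtain ⟨c1, hc1C, d1, hd1C, hc1e, hd1e, hA1, hA2⟩ := (halt i hi1 him).1 hodd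
    have hc1 := hEF c1 hc1C hc1e
    have hd1 := hEF1 d1 hd1C hd1e
    rw [hc1, hd1] at hA1 hA2
    -- hA1 : f.1 ≤ e.1, hA2 : e.2 < f.2
    by_cases hem : ∃ j < k, e = path (j+1)
    · obtain ⟨j, hj, hej⟩ := hem
      have heM := hnew_moved j hj
      have he'val : entry' (path j) = i := by rw [heM.2, ← hej, hei]
      rcases hstep j hj with ⟨hst, hstC, hstE⟩ | ⟨hst, hstC, hstE⟩
      · -- right-step : e = (P1, P2+1), new e at path j
        have heP : e.1 = (path j).1 ∧ e.2 = (path j).2 + 1 := by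
          rw [hej, hst]; exact ⟨rfl, rfl⟩
        by_cases hfm : ∃ l < k, f = path (l+1)
        · obtain ⟨hk2, hf2⟩ := hnext j hj f hfC (by rw [← hej, hfi, hei]) hfm
          have hfM := hnew_moved (j+1) hk2
          refine ⟨path j, heM.1, path (j+1), hfM.1, he'val, ?_, ?_, ?_⟩
          · rw [hfM.2, ← hf2, hfi]
          · rw [← hej]; omega
          · rw [← hej]; omega
        · have hfun : ∀ j', 1 ≤ j' → j' ≤ k → f ≠ path j' := by
            intro j' h1 h2 hfeq
            cases j' with
            | zero => omega
            | succ n => exact hfm ⟨n, by omega, hfeq⟩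
          have hfU := hnew_unmoved f hfC hfun
          refine ⟨path j, heM.1, f, hfU.1, he'val, by rw [hfU.2, hfi], by omega, by omega⟩
      · -- down-step : e = (P1+1, P2)
        have heP : e.1 = (path j).1 + 1 ∧ e.2 = (path j).2 := by
          rw [hej, hst]; exact ⟨rfl, rfl⟩
        -- find q = (e.1, e.2+1) ∈ C with entry i+1, or finish directly
        by_cases hfm : ∃ l < k, f = path (l+1)
        · obtain ⟨hk2, hf2⟩ := hnext j hj f hfC (by rw [← hej, hfi, hei]) hfm
          -- f adjacent to e; by ascent must be the right neighbour
          have hq : f = (e.1, e.2 + 1) := by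
            rcases hstep (j+1) hk2 with ⟨ha, _, _⟩ | ⟨ha, _, _⟩
            · rw [← hf2] at ha; rw [ha, ← hej]
            · rw [← hf2] at ha
              exfalso
              have : f.1 = e.1 + 1 := by rw [ha, ← hej]
              omega
          exfalso
          -- shape contradiction
          have hrC : ((path j).1, (path j).2 + 1) ∉ C := by
            intro hr
            have h1 := hstE hr
            rw [← hej, hei] at h1
            have h2 : entry ((path j).1, (path j).2 + 1) < entry ((path j).1 + 1, (path j).2 + 1) := by
              refine hcol _ _ hr ?_
              have : ((path j).1 + 1, (path j).2 + 1) = f := by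
                rw [hq]; rw [Prod.mk.injEq]; omega
              rw [this]; exact hfC
            have h3 : ((path j).1 + 1, (path j).2 + 1) = f := by
              rw [hq]; rw [Prod.mk.injEq]; omega
            rw [h3, hfi] at h2
            omega
          have hrc : ((path j).1, (path j).2 + 1) ≠ c := by
            intro h
            have := (hcoord j (by omega)).2
            rw [← h] at this
            dsimp only at this
            omega
          refine shape_no_hook hD (a := (path j).1) (x := (path j).2) ?_ ?_ ?_
          · have := hpD j (by omega)
            rwa [(rfl : ((path j).1, (path j).2) = path j)]
          · intro h
            rcases Finset.mem_insert.mp h with h | h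
            · exact hrc h
            · exact hrC h
          · refine Finset.mem_insert_of_mem ?_
            have : ((path j).1 + 1, (path j).2 + 1) = f := by
              rw [hq]; rw [Prod.mk.injEq]; omega
            rw [this]; exact hfC
        · -- f unmoved
          have hfun : ∀ j', 1 ≤ j' → j' ≤ k → f ≠ path j' := by
            intro j' h1 h2 hfeq
            cases j' with
            | zero => omega
            | succ n => exact hfm ⟨n, by omega, hfeq⟩
          have hfU := hnew_unmoved f hfC hfun
          by_cases hf1 : f.1 ≤ (path j).1
          · exact ⟨path j, heM.1, f, hfU.1, he'val, by rw [hfU.2, hfi], hf1, by omega⟩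
          · -- f.1 = e.1 ; same-row, get q and contradiction
            exfalso
            have hf1e : f.1 = e.1 := by omega
            have hqC : (e.1, e.2 + 1) ∈ C := by
              have hfC' : (e.1, f.2) ∈ C := by
                have : (e.1, f.2) = f := by rw [Prod.mk.injEq]; omega
                rw [this]; exact hfC
              exact straight_row_prefix hmem hfC' (by have := (straight_ge hmem heC).2; omega) (by omega)
            have hqv : entry (e.1, e.2 + 1) = i + 1 := by
              have h1 : entry (e.1, e.2) < entry (e.1, e.2 + 1) := by
                refine hrow _ _ ?_ hqC
                rwa [(rfl : (e.1, e.2) = e)]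
              rw [(rfl : (e.1, e.2) = e), hei] at h1
              rcases Nat.lt_or_ge (e.2 + 1) f.2 with h | h
              · have h2 : entry (e.1, e.2 + 1) < entry (e.1, f.2) := by
                  refine entry_row_mono hmem hrow hqC ?_ h
                  have : (e.1, f.2) = f := by rw [Prod.mk.injEq]; omega
                  rw [this]; exact hfC
                have : (e.1, f.2) = f := by rw [Prod.mk.injEq]; omega
                rw [this, hfi] at h2
                omega
              · have : (e.1, e.2 + 1) = f := by rw [Prod.mk.injEq]; omega
                rw [this, hfi]
            have hrC : ((path j).1, (path j).2 + 1) ∉ C := by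
              intro hr
              have h1 := hstE hr
              rw [← hej, hei] at h1
              have h2 : entry ((path j).1, (path j).2 + 1) < entry ((path j).1 + 1, (path j).2 + 1) := by
                refine hcol _ _ hr ?_
                have : ((path j).1 + 1, (path j).2 + 1) = (e.1, e.2 + 1) := by
                  rw [Prod.mk.injEq]; omega
                rw [this]; exact hqC
              have h3 : ((path j).1 + 1, (path j).2 + 1) = (e.1, e.2 + 1) := by
                rw [Prod.mk.injEq]; omega
              rw [h3, hqv] at h2
              omega
            have hrc : ((path j).1, (path j).2 + 1) ≠ c := by
              intro h
              have := (hcoord j (by omega)).2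
              rw [← h] at this
              dsimp only at this
              omega
            refine shape_no_hook hD (a := (path j).1) (x := (path j).2) ?_ ?_ ?_
            · have := hpD j (by omega)
              rwa [(rfl : ((path j).1, (path j).2) = path j)]
            · intro h
              rcases Finset.mem_insert.mp h with h | h
              · exact hrc h
              · exact hrC h
            · refine Finset.mem_insert_of_mem ?_
              have : ((path j).1 + 1, (path j).2 + 1) = (e.1, e.2 + 1) := by
                rw [Prod.mk.injEq]; omega
              rw [this]; exact hqC
    · -- e unmoved
      have heun : ∀ j', 1 ≤ j' → j' ≤ k → e ≠ path j' := by
        intro j' h1 h2 heq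
        cases j' with
        | zero => omega
        | succ n => exact hem ⟨n, by omega, heq⟩
      have heU := hnew_unmoved e heC heun
      by_cases hfm : ∃ l < k, f = path (l+1)
      · obtain ⟨j, hj, hfj⟩ := hfm
        have hfM := hnew_moved j hj
        have hf'val : entry' (path j) = i + 1 := by rw [hfM.2, ← hfj, hfi]
        rcases hstep j hj with ⟨hst, hstC, hstE⟩ | ⟨hst, hstC, hstE⟩
        · -- right-step : f = (P1, P2+1)
          have hfP : f.1 = (path j).1 ∧ f.2 = (path j).2 + 1 := by
            rw [hfj, hst]; exact ⟨rfl, rfl⟩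
          rcases Nat.lt_or_ge e.2 ((path j).2) with h | h
          · exact ⟨e, heU.1, path j, hfM.1, by rw [heU.2, hei], hf'val, by omega, h⟩
          · -- e.2 = P2
            have he2 : e.2 = (path j).2 := by omega
            rcases Nat.lt_or_ge f.1 e.1 with h2 | h2
            · -- f.1 < e.1 : contradiction via b = (P1+1, P2)
              exfalso
              have hbC : ((path j).1 + 1, (path j).2) ∈ C := by
                have heC' : (e.1, (path j).2) ∈ C := by
                  have : (e.1, (path j).2) = e := by rw [Prod.mk.injEq]; omega
                  rw [this]; exact heC
                exact straight_col_prefix hmem hchain heC'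
                  (by have := (straight_ge hmem hfC).1; omega) (by omega)
              have h3 := hstE hbC
              rw [← hfj, hfi] at h3
              rcases Nat.lt_or_ge ((path j).1 + 1) e.1 with h4 | h4
              · have h5 : entry ((path j).1 + 1, (path j).2) < entry (e.1, (path j).2) := by
                  refine entry_col_mono hmem hchain hcol hbC ?_ h4
                  have : (e.1, (path j).2) = e := by rw [Prod.mk.injEq]; omega
                  rw [this]; exact heC
                have : (e.1, (path j).2) = e := by rw [Prod.mk.injEq]; omega
                rw [this, hei] at h5
                omega
              · have : ((path j).1 + 1, (path j).2) = e := by rw [Prod.mk.injEq]; omega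
                rw [this, hei] at h3
                omega
            · -- f.1 = e.1 : then path j = e, contradiction
              exfalso
              have : path j = e := by
                have : path j = (e.1, e.2) := by
                  rw [(rfl : (path j) = ((path j).1, (path j).2))]
                  rw [Prod.mk.injEq]; omega
                rwa [(rfl : (e.1, e.2) = e)] at this
              cases j with
              | zero => rw [h0] at this; rw [← this] at heC; exact hcC heC
              | succ n => exact heun (n+1) (by omega) (by omega) this.symm
        · -- down-step : f = (P1+1, P2) : always fine
          have hfP : f.1 = (path j).1 + 1 ∧ f.2 = (path j).2 := by
            rw [hfj, hst]; exact ⟨rfl, rfl⟩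
          exact ⟨e, heU.1, path j, hfM.1, by rw [heU.2, hei], hf'val, by omega, by omega⟩
      · -- both unmoved
        have hfun : ∀ j', 1 ≤ j' → j' ≤ k → f ≠ path j' := by
          intro j' h1 h2 hfeq
          cases j' with
          | zero => omega
          | succ n => exact hfm ⟨n, by omega, hfeq⟩
        have hfU := hnew_unmoved f hfC hfun
        exact ⟨e, heU.1, f, hfU.1, by rw [heU.2, hei], by rw [hfU.2, hfi], hA1, hA2⟩
  · -- Even: Descent
    intro heven
    obtain ⟨c1, hc1C, d1, hd1C, hc1e, hd1e, hA1, hA2⟩ := (halt i hi1 him).2 heven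
    have hc1 := hEF c1 hc1C hc1e
    have hd1 := hEF1 d1 hd1C hd1e
    rw [hc1, hd1] at hA1 hA2
    -- hA1 : e.1 < f.1, hA2 : f.2 ≤ e.2
    by_cases hem : ∃ j < k, e = path (j+1)
    · obtain ⟨j, hj, hej⟩ := hem
      have heM := hnew_moved j hj
      have he'val : entry' (path j) = i := by rw [heM.2, ← hej, hei]
      rcases hstep j hj with ⟨hst, hstC, hstE⟩ | ⟨hst, hstC, hstE⟩
      · -- right-step : e = (P1, P2+1)
        have heP : e.1 = (path j).1 ∧ e.2 = (path j).2 + 1 := by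
          rw [hej, hst]; exact ⟨rfl, rfl⟩
        by_cases hfm : ∃ l < k, f = path (l+1)
        · obtain ⟨hk2, hf2⟩ := hnext j hj f hfC (by rw [← hej, hfi, hei]) hfm
          -- f adjacent below e
          have hq : f = (e.1 + 1, e.2) := by
            rcases hstep (j+1) hk2 with ⟨ha, _, _⟩ | ⟨ha, _, _⟩
            · rw [← hf2] at ha
              exfalso
              have : f.2 = e.2 + 1 := by rw [ha, ← hej]
              omega
            · rw [← hf2] at ha; rw [ha, ← hej]
          exfalso
          -- b = (P1+1, P2) = (e.1+1, e.2-1) ∉ C then left edge argument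
          have hbC : ((path j).1 + 1, (path j).2) ∉ C := by
            intro hb
            have h1 := hstE hb
            rw [← hej, hei] at h1
            have h2 : entry ((path j).1 + 1, (path j).2) < entry ((path j).1 + 1, (path j).2 + 1) := by
              refine hrow _ _ hb ?_
              have : ((path j).1 + 1, (path j).2 + 1) = f := by rw [hq, Prod.mk.injEq]; omega
              rw [this]; exact hfC
            have h3 : ((path j).1 + 1, (path j).2 + 1) = f := by rw [hq, Prod.mk.injEq]; omega
            rw [h3, hfi] at h2
            omega
          have hc0 : (path j).2 + 1 = c0 := by
            refine straight_left_edge hmem (a := (path j).1 + 1) ?_ hbC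
            have : ((path j).1 + 1, (path j).2 + 1) = f := by rw [hq, Prod.mk.injEq]; omega
            rw [this]; exact hfC
          cases j with
          | succ n =>
            have hPC : path (n+1) ∈ C := hpmem n (by omega)
            have := (straight_ge hmem hPC).2
            omega
          | zero =>
            -- path 0 = c ; use i ≥ 2 and ascent at i-1
            obtain ⟨n, rfl⟩ : ∃ n, i = n + 1 := ⟨i - 1, by omega⟩
            have hn1 : 1 ≤ n := by
              rcases Nat.even_iff.mp heven with h
              omega
            obtain ⟨c2, hc2C, d2, hd2C, hc2e, hd2e, hB1, hB2⟩ :=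
              (halt n hn1 (by omega)).1 (by
                rcases Nat.even_iff.mp heven with h
                exact Nat.odd_iff.mpr (by omega))
            have hd2 : d2 = e := hEF d2 hd2C hd2e
            rw [hd2] at hB2
            have := (straight_ge hmem hc2C).2
            omega
        · -- f unmoved
          have hfun : ∀ j', 1 ≤ j' → j' ≤ k → f ≠ path j' := by
            intro j' h1 h2 hfeq
            cases j' with
            | zero => omega
            | succ n => exact hfm ⟨n, by omega, hfeq⟩
          have hfU := hnew_unmoved f hfC hfun
          by_cases hf2 : f.2 ≤ (path j).2
          · exact ⟨path j, heM.1, f, hfU.1, he'val, by rw [hfU.2, hfi], by omega, hf2⟩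
          · -- f.2 = e.2, same-column below
            exfalso
            have hf2e : f.2 = e.2 := by omega
            have hqC : (e.1 + 1, e.2) ∈ C := by
              have hfC' : (f.1, e.2) ∈ C := by
                have : (f.1, e.2) = f := by rw [Prod.mk.injEq]; omega
                rw [this]; exact hfC
              exact straight_col_prefix hmem hchain hfC'
                (by have := (straight_ge hmem heC).1; omega) (by omega)
            have hqv : entry (e.1 + 1, e.2) = i + 1 := by
              have h1 : entry (e.1, e.2) < entry (e.1 + 1, e.2) := by
                refine hcol _ _ ?_ hqC
                rwa [(rfl : (e.1, e.2) = e)]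
              rw [(rfl : (e.1, e.2) = e), hei] at h1
              rcases Nat.lt_or_ge (e.1 + 1) f.1 with h | h
              · have h2 : entry (e.1 + 1, e.2) < entry (f.1, e.2) := by
                  refine entry_col_mono hmem hchain hcol hqC ?_ h
                  have : (f.1, e.2) = f := by rw [Prod.mk.injEq]; omega
                  rw [this]; exact hfC
                have : (f.1, e.2) = f := by rw [Prod.mk.injEq]; omega
                rw [this, hfi] at h2
                omega
              · have : (e.1 + 1, e.2) = f := by rw [Prod.mk.injEq]; omega
                rw [this, hfi]
            have hbC : ((path j).1 + 1, (path j).2) ∉ C := by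
              intro hb
              have h1 := hstE hb
              rw [← hej, hei] at h1
              have h2 : entry ((path j).1 + 1, (path j).2) < entry ((path j).1 + 1, (path j).2 + 1) := by
                refine hrow _ _ hb ?_
                have : ((path j).1 + 1, (path j).2 + 1) = (e.1 + 1, e.2) := by rw [Prod.mk.injEq]; omega
                rw [this]; exact hqC
              have h3 : ((path j).1 + 1, (path j).2 + 1) = (e.1 + 1, e.2) := by rw [Prod.mk.injEq]; omega
              rw [h3, hqv] at h2
              omega
            have hc0 : (path j).2 + 1 = c0 := by
              refine straight_left_edge hmem (a := (path j).1 + 1) ?_ hbC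
              have : ((path j).1 + 1, (path j).2 + 1) = (e.1 + 1, e.2) := by rw [Prod.mk.injEq]; omega
              rw [this]; exact hqC
            cases j with
            | succ n =>
              have hPC : path (n+1) ∈ C := hpmem n (by omega)
              have := (straight_ge hmem hPC).2
              omega
            | zero =>
              obtain ⟨n, rfl⟩ : ∃ n, i = n + 1 := ⟨i - 1, by omega⟩
              have hn1 : 1 ≤ n := by
                rcases Nat.even_iff.mp heven with h
                omega
              obtain ⟨c2, hc2C, d2, hd2C, hc2e, hd2e, hB1, hB2⟩ :=
                (halt n hn1 (by omega)).1 (by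
                  rcases Nat.even_iff.mp heven with h
                  exact Nat.odd_iff.mpr (by omega))
              have hd2 : d2 = e := hEF d2 hd2C hd2e
              rw [hd2] at hB2
              have := (straight_ge hmem hc2C).2
              omega
      · -- down-step : e = (P1+1, P2) : always fine
        have heP : e.1 = (path j).1 + 1 ∧ e.2 = (path j).2 := by
          rw [hej, hst]; exact ⟨rfl, rfl⟩
        by_cases hfm : ∃ l < k, f = path (l+1)
        · obtain ⟨hk2, hf2⟩ := hnext j hj f hfC (by rw [← hej, hfi, hei]) hfm
          have hfM := hnew_moved (j+1) hk2
          refine ⟨path j, heM.1, path (j+1), hfM.1, he'val, ?_, ?_, ?_⟩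
          · rw [hfM.2, ← hf2, hfi]
          · rw [← hej]; omega
          · rw [← hej]; omega
        · have hfun : ∀ j', 1 ≤ j' → j' ≤ k → f ≠ path j' := by
            intro j' h1 h2 hfeq
            cases j' with
            | zero => omega
            | succ n => exact hfm ⟨n, by omega, hfeq⟩
          have hfU := hnew_unmoved f hfC hfun
          exact ⟨path j, heM.1, f, hfU.1, he'val, by rw [hfU.2, hfi], by omega, by omega⟩
    · -- e unmoved
      have heun : ∀ j', 1 ≤ j' → j' ≤ k → e ≠ path j' := by
        intro j' h1 h2 heq
        cases j' with
        | zero => omega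
        | succ n => exact hem ⟨n, by omega, heq⟩
      have heU := hnew_unmoved e heC heun
      by_cases hfm : ∃ l < k, f = path (l+1)
      · obtain ⟨j, hj, hfj⟩ := hfm
        have hfM := hnew_moved j hj
        have hf'val : entry' (path j) = i + 1 := by rw [hfM.2, ← hfj, hfi]
        rcases hstep j hj with ⟨hst, hstC, hstE⟩ | ⟨hst, hstC, hstE⟩
        · -- right-step : f = (P1, P2+1) : fine
          have hfP : f.1 = (path j).1 ∧ f.2 = (path j).2 + 1 := by
            rw [hfj, hst]; exact ⟨rfl, rfl⟩
          exact ⟨e, heU.1, path j, hfM.1, by rw [heU.2, hei], hf'val, by omega, by omega⟩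
        · -- down-step : f = (P1+1, P2)
          have hfP : f.1 = (path j).1 + 1 ∧ f.2 = (path j).2 := by
            rw [hfj, hst]; exact ⟨rfl, rfl⟩
          rcases Nat.lt_or_ge e.1 ((path j).1) with h | h
          · exact ⟨e, heU.1, path j, hfM.1, by rw [heU.2, hei], hf'val, h, by omega⟩
          · have he1 : e.1 = (path j).1 := by omega
            rcases Nat.lt_or_ge f.2 e.2 with h2 | h2
            · -- r = (P1, P2+1) = (e.1, f.2+1) ∈ C, contradiction
              exfalso
              have hrC : ((path j).1, (path j).2 + 1) ∈ C := by
                have heC' : (e.1, e.2) ∈ C := by rwa [(rfl : (e.1, e.2) = e)]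
                have : ((path j).1, (path j).2 + 1) = (e.1, (path j).2 + 1) := by
                  rw [Prod.mk.injEq]; omega
                rw [this]
                exact straight_row_prefix hmem heC'
                  (by have := (straight_ge hmem hfC).2; omega) (by omega)
              have h3 := hstE hrC
              rw [← hfj, hfi] at h3
              rcases Nat.lt_or_ge ((path j).2 + 1) e.2 with h4 | h4
              · have h5 : entry ((path j).1, (path j).2 + 1) < entry (e.1, e.2) := by
                  have : (e.1, e.2) = ((path j).1, e.2) := by rw [Prod.mk.injEq]; omega
                  rw [this]
                  refine entry_row_mono hmem hrow ?_ ?_ h4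
                  · have : ((path j).1, (path j).2 + 1) ∈ C := hrC
                    exact this
                  · have : ((path j).1, e.2) = e := by rw [Prod.mk.injEq]; omega
                    rw [this]; exact heC
                rw [(rfl : (e.1, e.2) = e), hei] at h5
                omega
              · have : ((path j).1, (path j).2 + 1) = e := by rw [Prod.mk.injEq]; omega
                rw [this, hei] at h3
                omega
            · -- f.2 = e.2 : path j = e contradiction
              exfalso
              have : path j = e := by
                have : path j = (e.1, e.2) := by
                  rw [(rfl : (path j) = ((path j).1, (path j).2))]
                  rw [Prod.mk.injEq]; omega
                rwa [(rfl : (e.1, e.2) = e)] at this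
              cases j with
              | zero => rw [h0] at this; rw [← this] at heC; exact hcC heC
              | succ n => exact heun (n+1) (by omega) (by omega) this.symm
      · have hfun : ∀ j', 1 ≤ j' → j' ≤ k → f ≠ path j' := by
          intro j' h1 h2 hfeq
          cases j' with
          | zero => omega
          | succ n => exact hfm ⟨n, by omega, hfeq⟩
        have hfU := hnew_unmoved f hfC hfun
        exact ⟨e, heU.1, f, hfU.1, by rw [heU.2, hei], by rw [hfU.2, hfi], hA1, hA2⟩
end
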